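/- arXiv:2509.16075 — 8 statements merged into one kernel-verified Lean document; each statement's English description precedes it below -/
import Mathlib

section
/- Let s be a positive natural number and let α be a real number with 0 < α < 1. Let (a_n) be a sequence of nonnegative real numbers such that for all n > s, a_n ≤ (α/s) · Σ_{i=n-s}^{n-1} a_i. Then the infinite series Σ_{i=1}^∞ a_i converges. -/
/-- Generalized ratio test: if each term is bounded by `α/s` times the sum of the
previous `s` terms, the series `∑_{i=1}^∞ a_i` converges. -/
theorem generalized_ratio_test (s : ℕ) (hs : 0 < s) (α : ℝ) (hα0 : 0 < α) (hα1 : α < 1)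
    (a : ℕ → ℝ) (ha : ∀ n, 0 ≤ a n)
    (hrec : ∀ n, s < n → a n ≤ (α / s) * ∑ i ∈ Finset.Ico (n - s) n, a i) :
    Summable (fun i : ℕ => a (i + 1)) := by
  set S : ℕ → ℝ := fun N => ∑ i ∈ Finset.Ico 1 (N + 1), a i with hSdef
  have hSnonneg : ∀ N, 0 ≤ S N := fun N => Finset.sum_nonneg fun i _ => ha i
  have hSmono : ∀ {M N : ℕ}, M ≤ N → S M ≤ S N := by
    intro M N h
    exact Finset.sum_le_sum_of_subset_of_nonneg
      (Finset.Ico_subset_Ico le_rfl (by omega)) (fun i _ _ => ha i)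
  have key : ∀ N, S N ≤ S s + α * S N := by
    intro N
    rcases le_or_gt N s with h | h
    · have := hSmono h
      nlinarith [hSnonneg N]
    · have hsplit : S N = S s + ∑ n ∈ Finset.Ico (s + 1) (N + 1), a n :=
        (Finset.sum_Ico_consecutive a (by omega : 1 ≤ s + 1) (by omega : s + 1 ≤ N + 1)).symm
      have step1 : ∑ n ∈ Finset.Ico (s + 1) (N + 1), a n ≤
          (α / s) * ∑ n ∈ Finset.Ico (s + 1) (N + 1), ∑ i ∈ Finset.Ico (n - s) n, a i := by
        rw [Finset.mul_sum]
        apply Finset.sum_le_sum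
        intro n hn
        simp only [Finset.mem_Ico] at hn
        exact hrec n (by omega)
      have step2 : ∑ n ∈ Finset.Ico (s + 1) (N + 1), ∑ i ∈ Finset.Ico (n - s) n, a i
          ≤ s * S N := by
        have hrw : ∀ n ∈ Finset.Ico (s + 1) (N + 1),
            ∑ i ∈ Finset.Ico (n - s) n, a i
            = ∑ i ∈ Finset.Ico 1 (N + 1), if n - s ≤ i ∧ i < n then a i else 0 := by
          intro n hn
          simp only [Finset.mem_Ico] at hn
          rw [Finset.sum_ite, Finset.sum_const_zero, add_zero]
          apply Finset.sum_congr _ (fun _ _ => rfl)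
          ext i
          simp only [Finset.mem_filter, Finset.mem_Ico]
          omega
        rw [Finset.sum_congr rfl hrw, Finset.sum_comm]
        have hbound : ∀ i ∈ Finset.Ico 1 (N + 1),
            ∑ n ∈ Finset.Ico (s + 1) (N + 1), (if n - s ≤ i ∧ i < n then a i else 0)
            ≤ s * a i := by
          intro i hi
          rw [Finset.sum_ite, Finset.sum_const_zero, add_zero, Finset.sum_const,
            nsmul_eq_mul]
          have hcard : ((Finset.Ico (s + 1) (N + 1)).filter
              (fun n => n - s ≤ i ∧ i < n)).card ≤ s := by
            have hsub : (Finset.Ico (s + 1) (N + 1)).filter (fun n => n - s ≤ i ∧ i < n)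
                ⊆ Finset.Ico (i + 1) (i + s + 1) := by
              intro n hn
              simp only [Finset.mem_filter, Finset.mem_Ico] at *
              omega
            calc _ ≤ (Finset.Ico (i + 1) (i + s + 1)).card := Finset.card_le_card hsub
              _ = s := by rw [Nat.card_Ico]; omega
          exact mul_le_mul_of_nonneg_right (by exact_mod_cast hcard) (ha i)
        calc _ ≤ ∑ i ∈ Finset.Ico 1 (N + 1), (s : ℝ) * a i := Finset.sum_le_sum hbound
          _ = s * S N := by rw [hSdef, Finset.mul_sum]
      have : (α / s) * ∑ n ∈ Finset.Ico (s + 1) (N + 1), ∑ i ∈ Finset.Ico (n - s) n, a i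
          ≤ (α / s) * (s * S N) := by
        apply mul_le_mul_of_nonneg_left step2
        positivity
      have hss : (α / s) * (s * S N) = α * S N := by
        field_simp
      linarith [step1, hsplit ▸ le_refl (S N)]
  have hbdd : ∀ N, S N ≤ S s / (1 - α) := by
    intro N
    have h1 : 0 < 1 - α := by linarith
    have := key N
    rw [le_div_iff₀ h1]
    nlinarith
  apply summable_of_sum_range_le (c := S s / (1 - α)) (fun n => ha (n + 1))
  intro N
  have : ∑ i ∈ Finset.range N, a (i + 1) = S N := by
    show _ = ∑ i ∈ Finset.Ico 1 (N + 1), a i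
    rw [Finset.sum_Ico_eq_sum_range]
    simp [add_comm]
  rw [this]
  exact hbdd N
end

section
/- Let s be a positive natural number, 0 < α < 1, and let (b_n) be the sequence defined by b_n = a_n for n ≤ s (where a_1,...,a_s are given nonnegative reals) and b_n = (α/s) · Σ_{i=n-s}^{n-1} b_i for n > s. Then for all i, b_i ≤ α^(⌈i/s⌉ - 1) · M, where M = max{b_1, ..., b_s}. -/
/-- The recursively defined majorizing sequence in the generalized ratio test decays
geometrically in blocks of length `s`: `b i ≤ α^(⌈i/s⌉ - 1) * M` where
`M = max {b 1, …, b s}`. -/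
theorem majorizing_sequence_geometric_decay (s : ℕ) (hs : 0 < s) (α : ℝ)
    (hα0 : 0 < α) (hα1 : α < 1) (a b : ℕ → ℝ)
    (ha : ∀ i, 1 ≤ i → i ≤ s → 0 ≤ a i)
    (hb1 : ∀ n, 1 ≤ n → n ≤ s → b n = a n)
    (hb2 : ∀ n, s < n → b n = (α / s) * ∑ i ∈ Finset.Ico (n - s) n, b i)
    (M : ℝ) (hM : IsGreatest (b '' (Set.Icc 1 s)) M) :
    ∀ i, 1 ≤ i → b i ≤ α ^ (⌈(i : ℝ) / (s : ℝ)⌉₊ - 1) * M := by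
  have hspos : (0:ℝ) < s := by exact_mod_cast hs
  have hM0 : 0 ≤ M := by
    have h1 : b 1 ∈ b '' (Set.Icc 1 s) := ⟨1, ⟨le_refl 1, hs⟩, rfl⟩
    have h2 : 0 ≤ b 1 := by rw [hb1 1 le_rfl hs]; exact ha 1 le_rfl hs
    exact h2.trans (hM.2 h1)
  intro i
  induction i using Nat.strong_induction_on with
  | _ i ih =>
  intro hi1
  by_cases hle : i ≤ s
  · have hc : ⌈(i:ℝ)/s⌉₊ = 1 := by
      have h1 : ⌈(i:ℝ)/s⌉₊ ≤ 1 := by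
        rw [Nat.ceil_le]
        push_cast
        rw [div_le_one hspos]
        exact_mod_cast hle
      have h2 : 1 ≤ ⌈(i:ℝ)/s⌉₊ := by
        rw [Nat.one_le_ceil_iff]
        have : (0:ℝ) < i := by exact_mod_cast hi1
        positivity
      omega
    rw [hc]
    simpa using hM.2 ⟨i, ⟨hi1, hle⟩, rfl⟩
  · push_neg at hle
    have hc2 : 2 ≤ ⌈(i:ℝ)/s⌉₊ := by
      have : 1 < ⌈(i:ℝ)/s⌉₊ := by
        rw [Nat.lt_ceil]
        rw [lt_div_iff₀ hspos]
        push_cast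
        simpa using (by exact_mod_cast hle : (s:ℝ) < i)
      omega
    set c := ⌈(i:ℝ)/s⌉₊ with hcdef
    have hkey : ∀ j ∈ Finset.Ico (i - s) i, b j ≤ α ^ (c - 2) * M := by
      intro j hj
      rw [Finset.mem_Ico] at hj
      have hj1 : 1 ≤ j := by omega
      refine (ih j hj.2 hj1).trans ?_
      apply mul_le_mul_of_nonneg_right _ hM0
      apply pow_le_pow_of_le_one hα0.le hα1.le
      have hcj : (j:ℝ)/s ≤ ⌈(j:ℝ)/s⌉₊ := Nat.le_ceil _
      rw [div_le_iff₀ hspos] at hcj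
      have hcc : c ≤ ⌈(j:ℝ)/s⌉₊ + 1 := by
        rw [hcdef, Nat.ceil_le, div_le_iff₀ hspos]
        have hij : (i:ℝ) ≤ (j:ℝ) + s := by exact_mod_cast (by omega : i ≤ j + s)
        push_cast
        nlinarith
      omega
    have hcard : (Finset.Ico (i - s) i).card = s := by
      rw [Nat.card_Ico]; omega
    have hsum : ∑ j ∈ Finset.Ico (i - s) i, b j ≤ (s:ℝ) * (α ^ (c - 2) * M) := by
      calc ∑ j ∈ Finset.Ico (i - s) i, b j
          ≤ ∑ _j ∈ Finset.Ico (i - s) i, α ^ (c - 2) * M := Finset.sum_le_sum hkey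
        _ = (s:ℝ) * (α ^ (c - 2) * M) := by
            rw [Finset.sum_const, hcard]; simp [nsmul_eq_mul]
    rw [hb2 i hle]
    have hαs : 0 ≤ α / s := by positivity
    calc (α / s) * ∑ j ∈ Finset.Ico (i - s) i, b j
        ≤ (α / s) * ((s:ℝ) * (α ^ (c - 2) * M)) := mul_le_mul_of_nonneg_left hsum hαs
      _ = α * (α ^ (c - 2) * M) := by
          field_simp
      _ = α ^ (c - 1) * M := by
          have h : α * α ^ (c - 2) = α ^ (c - 1) := by
            rw [← pow_succ']
            congr 1
            omega
          rw [← mul_assoc, h]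
end

section
/- Let G be a finite directed graph with integer edge weights such that every cycle has strictly positive weight. Then for any two vertices i, j and any integer m, the number of walks from i to j with total weight exactly m is finite. -/
/-- The total weight of a walk given by its list of visited vertices. -/
def walkWeight {V : Type*} (w : V → V → ℤ) (ℓ : List V) : ℤ :=
  ((ℓ.zip ℓ.tail).map (fun p => w p.1 p.2)).sum

/-- `ℓ` is (the vertex list of) a walk from `i` to `j` in the directed graph with
edge relation `R`. -/
def IsWalk {V : Type*} (R : V → V → Prop) (i j : V) (ℓ : List V) : Prop :=
  ℓ.Chain' R ∧ ℓ.head? = some i ∧ ℓ.getLast? = some j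

/-- `ℓ` is a cycle: a nonempty closed walk whose internal vertices are distinct. -/
def IsCycle {V : Type*} (R : V → V → Prop) (ℓ : List V) : Prop :=
  ∃ v, IsWalk R v v ℓ ∧ 2 ≤ ℓ.length ∧ ℓ.tail.Nodup

lemma walkWeight_cons_cons {V : Type*} (w : V → V → ℤ) (a b : V) (l : List V) :
    walkWeight w (a :: b :: l) = w a b + walkWeight w (b :: l) := by
  simp [walkWeight]

lemma walkWeight_split {V : Type*} (w : V → V → ℤ) (x : V) :
    ∀ (s t : List V), walkWeight w (s ++ x :: t) = walkWeight w (s ++ [x]) + walkWeight w (x :: t) := by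
  intro s
  induction s with
  | nil => intro t; simp [walkWeight]
  | cons a s ih =>
    intro t
    cases s with
    | nil => simp [walkWeight_cons_cons, walkWeight]
    | cons b s' =>
      simp only [List.cons_append, walkWeight_cons_cons]
      have h := ih t
      simp only [List.cons_append] at h
      rw [h]
      ring

lemma first_occ {V : Type*} {a : V} : ∀ {t : List V}, a ∈ t → ∃ q r, t = q ++ a :: r ∧ a ∉ q := by
  intro t ht
  induction t with
  | nil => simp at ht
  | cons b t ih =>
    by_cases hb : a = b
    · exact ⟨[], t, by simp [hb], by simp⟩
    · have h : a ∈ t := by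
        rcases List.mem_cons.1 ht with h | h
        · exact absurd h hb
        · exact h
      obtain ⟨q, r, h1, h2⟩ := ih h
      exact ⟨b :: q, r, by simp [h1], by simp [hb, h2]⟩

lemma decomp {V : Type*} : ∀ (N : ℕ) (ℓ : List V), ℓ.length ≤ N → ¬ℓ.Nodup →
    ∃ (p : List V) (x : V) (q r : List V), ℓ = p ++ x :: (q ++ x :: r) ∧ (x :: q).Nodup := by
  intro N
  induction N with
  | zero =>
    intro ℓ hl hnd
    rw [Nat.le_zero, List.length_eq_zero_iff] at hl
    subst hl
    simp at hnd
  | succ N ih =>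
    intro ℓ hl hnd
    cases ℓ with
    | nil => simp at hnd
    | cons a t =>
      by_cases ha : a ∈ t
      · obtain ⟨q, r, htqr, haq⟩ := first_occ ha
        by_cases hq : q.Nodup
        · exact ⟨[], a, q, r, by simp [htqr], by simp [haq, hq]⟩
        · have hlen : q.length ≤ N := by
            have := hl
            simp [htqr] at this
            omega
          obtain ⟨p', x, q', r', h1, h2⟩ := ih q hlen hq
          refine ⟨a :: p', x, q', r' ++ a :: r, ?_, h2⟩
          simp [htqr, h1]
      · have hnt : ¬t.Nodup := by
          intro h'
          exact hnd (List.nodup_cons.2 ⟨ha, h'⟩)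
        obtain ⟨p, x, q, r, h1, h2⟩ := ih t (by simpa using hl) hnt
        exact ⟨a :: p, x, q, r, by simp [h1], h2⟩

lemma walkWeight_lower {V : Type*} (w : V → V → ℤ) (C : ℤ) (hC0 : 0 ≤ C)
    (hC : ∀ a b, -C ≤ w a b) (ℓ : List V) : -(ℓ.length : ℤ) * C ≤ walkWeight w ℓ := by
  have h1 : ((ℓ.zip ℓ.tail).map (fun p => w p.1 p.2)).length • (-C) ≤ walkWeight w ℓ := by
    apply List.card_nsmul_le_sum
    intro x hx
    obtain ⟨p, _, rfl⟩ := List.mem_map.1 hx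
    exact hC _ _
  have h2 : ((ℓ.zip ℓ.tail).map (fun p => w p.1 p.2)).length ≤ ℓ.length := by
    simp [List.length_zip]
  rw [nsmul_eq_mul] at h1
  have : -(ℓ.length : ℤ) * C ≤ (((ℓ.zip ℓ.tail).map (fun p => w p.1 p.2)).length : ℤ) * (-C) := by
    have : (((ℓ.zip ℓ.tail).map (fun p => w p.1 p.2)).length : ℤ) ≤ (ℓ.length : ℤ) := by
      exact_mod_cast h2
    nlinarith
  linarith

lemma length_bound {V : Type*} [Fintype V] (R : V → V → Prop) (w : V → V → ℤ)
    (hcyc : ∀ ℓ, IsCycle R ℓ → 0 < walkWeight w ℓ) (C : ℤ) (hC0 : 0 ≤ C)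
    (hC : ∀ a b, -C ≤ w a b) :
    ∀ (N : ℕ) (ℓ : List V), ℓ.length ≤ N → ℓ.Chain' R →
      (ℓ.length : ℤ) ≤ (Fintype.card V : ℤ) * walkWeight w ℓ +
        ((Fintype.card V : ℤ) + (Fintype.card V : ℤ)^2 * C) := by
  intro N
  set n : ℤ := (Fintype.card V : ℤ) with hn
  have hn0 : 0 ≤ n := by positivity
  induction N with
  | zero =>
    intro ℓ hl _
    rw [Nat.le_zero, List.length_eq_zero_iff] at hl
    subst hl
    simp only [List.length_nil, Nat.cast_zero, walkWeight, List.zip_nil_left, List.map_nil,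
      List.sum_nil, mul_zero, zero_add]
    positivity
  | succ N ih =>
    intro ℓ hl hch
    by_cases hle : ℓ.length ≤ Fintype.card V
    · have h1 := walkWeight_lower w C hC0 hC ℓ
      have h2 : (ℓ.length : ℤ) ≤ n := by rw [hn]; exact_mod_cast hle
      have h3 : (0:ℤ) ≤ (ℓ.length : ℤ) := by positivity
      have hA : n * (-(ℓ.length : ℤ) * C) ≤ n * walkWeight w ℓ := mul_le_mul_of_nonneg_left h1 hn0
      have hB : 0 ≤ n * C * (n - (ℓ.length : ℤ)) := mul_nonneg (mul_nonneg hn0 hC0) (by linarith)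
      nlinarith [hA, hB, h2]
    · push_neg at hle
      have hnd : ¬ℓ.Nodup := fun h => absurd h.length_le_card (by omega)
      obtain ⟨p, x, q, r, heq, hxq⟩ := decomp ℓ.length ℓ le_rfl hnd
      -- chain facts
      have hch2 : (p ++ ((x :: q) ++ (x :: r))).Chain' R := by
        rw [heq] at hch; simpa using hch
      rw [List.Chain', List.isChain_append] at hch2
      obtain ⟨hp, hmid, hlink⟩ := hch2
      rw [List.isChain_append] at hmid
      obtain ⟨hxqc, hxrc, hlink2⟩ := hmid
      -- the shortcut walk
      set ℓ' : List V := p ++ x :: r with hℓ'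
      have hch' : ℓ'.Chain' R := by
        rw [hℓ', List.Chain', List.isChain_append]
        refine ⟨hp, hxrc, ?_⟩
        intro a ha b hb
        exact hlink a ha b (by simpa using hb)
      -- the cycle
      set c : List V := (x :: q) ++ [x] with hc
      have hcyc' : IsCycle R c := by
        refine ⟨x, ⟨?_, rfl, ?_⟩, by simp [hc], ?_⟩
        · rw [hc, List.Chain', List.isChain_append]
          refine ⟨hxqc, List.isChain_singleton _, ?_⟩
          intro a ha b hb
          simp only [List.head?_cons, Option.mem_def, Option.some.injEq] at hb
          exact hb ▸ hlink2 a ha x rfl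
        · rw [hc]; exact List.getLast?_concat
        · show (q ++ [x]).Nodup
          rw [List.nodup_append]
          rcases List.nodup_cons.1 hxq with ⟨hxnq, hqnd⟩
          refine ⟨hqnd, List.nodup_singleton _, fun a ha _ hax => ?_⟩
          rw [List.mem_singleton] at hax
          subst hax
          exact fun h => hxnq (h ▸ ha)
      have hwc : 1 ≤ walkWeight w c := hcyc c hcyc'
      -- weight decomposition
      have hsplit : walkWeight w ℓ = walkWeight w ℓ' + walkWeight w c := by
        have e1 : walkWeight w ℓ = walkWeight w (p ++ [x]) + walkWeight w (x :: (q ++ x :: r)) := by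
          rw [heq]; exact walkWeight_split w x p _
        have e2 : walkWeight w (x :: (q ++ x :: r)) = walkWeight w c + walkWeight w (x :: r) := by
          rw [show x :: (q ++ x :: r) = (x :: q) ++ x :: r by simp, walkWeight_split, hc]
        have e3 : walkWeight w ℓ' = walkWeight w (p ++ [x]) + walkWeight w (x :: r) := by
          rw [hℓ']; exact walkWeight_split w x p r
        rw [e1, e2, e3]; ring
      -- lengths
      have hqlen : (q.length : ℤ) + 1 ≤ n := by
        have h := hxq.length_le_card
        simp only [List.length_cons] at h
        rw [hn]
        exact_mod_cast h
      have hlenN : ℓ.length = ℓ'.length + q.length + 1 := by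
        rw [heq, hℓ']
        simp [List.length_append]
        omega
      have hlen : (ℓ.length : ℤ) = (ℓ'.length : ℤ) + (q.length : ℤ) + 1 := by
        exact_mod_cast hlenN
      have hlen' : ℓ'.length ≤ N := by omega
      have hb := ih ℓ' hlen' hch'
      have hnwc : n ≤ n * walkWeight w c := le_mul_of_one_le_right hn0 hwc
      rw [hsplit]
      linarith

/-- In a finite directed graph with integer weights in which every cycle has strictly
positive weight, for any vertices `i, j` and integer `m`, there are only finitely many
`i,j`-walks of total weight exactly `m`. -/
theorem finitely_many_walks_of_fixed_weight {V : Type*} [Fintype V]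
    (R : V → V → Prop) (w : V → V → ℤ)
    (hcyc : ∀ ℓ, IsCycle R ℓ → 0 < walkWeight w ℓ) (i j : V) (m : ℤ) :
    {ℓ : List V | IsWalk R i j ℓ ∧ walkWeight w ℓ = m}.Finite := by
  classical
  set C : ℤ := ∑ p : V × V, |w p.1 p.2| with hCdef
  have hC0 : 0 ≤ C := Finset.sum_nonneg fun p _ => abs_nonneg _
  have hC : ∀ a b, -C ≤ w a b := by
    intro a b
    have h1 : |w a b| ≤ C :=
      Finset.single_le_sum (f := fun p : V × V => |w p.1 p.2|)
        (fun p _ => abs_nonneg _) (Finset.mem_univ (a, b))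
    linarith [neg_abs_le (w a b)]
  apply Set.Finite.subset (List.finite_length_le (α := V)
    ((Fintype.card V : ℤ) * m + ((Fintype.card V : ℤ) + (Fintype.card V : ℤ) ^ 2 * C)).toNat)
  rintro ℓ ⟨⟨hch, -, -⟩, hw⟩
  have hb := length_bound R w hcyc C hC0 hC ℓ.length ℓ le_rfl hch
  rw [hw] at hb
  simp only [Set.mem_setOf_eq]
  omega
end

section
/- For every d ≥ 2, the set C = {-1,1}^d \ {(-1,...,-1), (1,...,1)} is not hypercube-realizable. -/
/-- Points of `ℝ^d`. -/
abbrev Pt (d : ℕ) := Fin d → ℝ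

/-- A polyhedron: an intersection of finitely many closed halfspaces. -/
def IsPolyhedron {d : ℕ} (P : Set (Pt d)) : Prop :=
  ∃ s : Finset (Pt d × ℝ), P = {x | ∀ p ∈ s, (∑ i, p.1 i * x i) ≤ p.2}

/-- A face of a polyhedron: the empty set, the whole polyhedron, or the set of
maximizers of a linear functional. -/
def IsFace {d : ℕ} (P F : Set (Pt d)) : Prop :=
  F = ∅ ∨ F = P ∨
    ∃ c : Pt d, F = {x ∈ P | ∀ y ∈ P, (∑ i, c i * y i) ≤ ∑ i, c i * x i}

/-- The dimension of a subset of `ℝ^d`: the rank of its vector span. -/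
noncomputable def pdim {d : ℕ} (F : Set (Pt d)) : ℕ :=
  Module.finrank ℝ (vectorSpan ℝ F)

/-- A facet: a nonempty proper face of dimension one less than the polyhedron. -/
def IsFacet {d : ℕ} (P F : Set (Pt d)) : Prop :=
  IsFace P F ∧ F ≠ ∅ ∧ F ≠ P ∧ pdim F + 1 = pdim P

/-- A vertex of a polyhedron: a point whose singleton is a face. -/
def IsVertex {d : ℕ} (P : Set (Pt d)) (v : Pt d) : Prop := IsFace P {v}

/-- A polyhedron is simple if each vertex lies on exactly `dim P` facets. -/
def IsSimplePoly {d : ℕ} (P : Set (Pt d)) : Prop :=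
  ∀ v, IsVertex P v → {F | IsFacet P F ∧ v ∈ F}.ncard = pdim P

/-- `C ⊆ {-1,1}^d` (encoded by `Bool`s) is hypercube-realizable if there is a
`d`-dimensional simple polyhedron whose facets partition into `d` classes
`S 1, …, S d` of size 1 or 2 (the two facets of a size-2 class being disjoint), such
that `C` is the set of sign vectors `b v` of vertices `v`, where `b v i` records which
facet of class `i` contains `v` (and is constant over vertices for size-1 classes). -/
def HypercubeRealizable {d : ℕ} (C : Set (Fin d → Bool)) : Prop :=
  ∃ P : Set (Pt d), IsPolyhedron P ∧ pdim P = d ∧ IsSimplePoly P ∧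
    ∃ (S : Fin d → Set (Set (Pt d))) (b : Pt d → Fin d → Bool),
      (∀ F, IsFacet P F → ∃! i, F ∈ S i) ∧
      (∀ i F, F ∈ S i → IsFacet P F) ∧
      (∀ i, (S i).ncard = 1 ∨ (S i).ncard = 2) ∧
      (∀ i F₁ F₂, F₁ ∈ S i → F₂ ∈ S i → F₁ ≠ F₂ → F₁ ∩ F₂ = ∅) ∧
      (∀ i, (S i).ncard = 1 → ∀ v w, IsVertex P v → IsVertex P w → b v i = b w i) ∧
      (∀ i, (S i).ncard = 2 → ∃ F₁ F₂, F₁ ≠ F₂ ∧ S i = {F₁, F₂} ∧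
        ∀ v, IsVertex P v → ((b v i = false ↔ v ∈ F₁) ∧ (b v i = true ↔ v ∈ F₂))) ∧
      C = {x | ∃ v, IsVertex P v ∧ b v = x}

namespace HQ

variable {d : ℕ}

/-- The standard pairing. -/
def dot (c y : Pt d) : ℝ := ∑ i, c i * y i

lemma dot_add_right (c y z : Pt d) : dot c (y + z) = dot c y + dot c z := by
  simp [dot, mul_add, Finset.sum_add_distrib]

lemma dot_sub_right (c y z : Pt d) : dot c (y - z) = dot c y - dot c z := by
  simp [dot, mul_sub, Finset.sum_sub_distrib]

lemma dot_smul_right (c : Pt d) (t : ℝ) (y : Pt d) : dot c (t • y) = t * dot c y := by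
  simp only [dot, Pi.smul_apply, smul_eq_mul, Finset.mul_sum]
  exact Finset.sum_congr rfl fun i _ => by ring

lemma dot_comm (c y : Pt d) : dot c y = dot y c := by
  simp [dot, mul_comm]

lemma dot_add_left (c c' y : Pt d) : dot (c + c') y = dot c y + dot c' y := by
  rw [dot_comm, dot_add_right, dot_comm y c, dot_comm y c']

lemma dot_smul_left (t : ℝ) (c y : Pt d) : dot (t • c) y = t * dot c y := by
  rw [dot_comm, dot_smul_right, dot_comm]

lemma dot_neg_left (c y : Pt d) : dot (-c) y = - dot c y := by
  simp [dot]

lemma dot_zero_left (y : Pt d) : dot 0 y = 0 := by simp [dot]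

lemma dot_self_nonneg (u : Pt d) : 0 ≤ dot u u :=
  Finset.sum_nonneg fun i _ => mul_self_nonneg _

lemma dot_self_eq_zero {u : Pt d} (h : dot u u = 0) : u = 0 := by
  funext i
  have h1 : ∀ j ∈ Finset.univ (α := Fin d), (0:ℝ) ≤ u j * u j :=
    fun j _ => mul_self_nonneg _
  have := (Finset.sum_eq_zero_iff_of_nonneg h1).mp h i (Finset.mem_univ i)
  have := mul_self_eq_zero.mp this
  simpa using this

lemma dot_pos_self {u : Pt d} (h : u ≠ 0) : 0 < dot u u := by
  rcases lt_or_eq_of_le (dot_self_nonneg u) with h'|h'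
  · exact h'
  · exact absurd (dot_self_eq_zero h'.symm) h

/-- dot as a linear map in the second argument. -/
def dotl (c : Pt d) : Pt d →ₗ[ℝ] ℝ where
  toFun := dot c
  map_add' := dot_add_right c
  map_smul' := fun t y => by simp [dot_smul_right]

@[simp] lemma dotl_apply (c y : Pt d) : dotl c y = dot c y := rfl

lemma dot_sum_smul_left {ι : Type*} (t : Finset ι) (g : ι → ℝ) (w : ι → Pt d) (u : Pt d) :
    dot (∑ j ∈ t, g j • w j) u = ∑ j ∈ t, g j * dot (w j) u := by
  rw [dot_comm]
  have h0 : dot u (∑ j ∈ t, g j • w j) = dotl u (∑ j ∈ t, g j • w j) := rfl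
  rw [h0, map_sum]
  refine Finset.sum_congr rfl fun j _ => ?_
  rw [dotl_apply, dot_smul_right, dot_comm]

/-- Normalized description of a nonempty proper face. -/
lemma face_normal {P F : Set (Pt d)} (h : IsFace P F) (hne : F.Nonempty) (hnp : F ≠ P) :
    ∃ c μ, (∀ y ∈ P, dot c y ≤ μ) ∧ F = {y ∈ P | dot c y = μ} := by
  rcases h with h | h | ⟨c, h⟩
  · rw [h] at hne; exact absurd hne (by simp)
  · exact absurd h hnp
  · obtain ⟨x0, hx0⟩ := hne
    rw [h] at hx0
    obtain ⟨hx0P, hx0max⟩ := hx0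
    refine ⟨c, dot c x0, fun y hy => hx0max y hy, ?_⟩
    rw [h]
    ext z
    constructor
    · rintro ⟨hzP, hz⟩
      exact ⟨hzP, le_antisymm (hx0max z hzP) (hz x0 hx0P)⟩
    · rintro ⟨hzP, hz⟩
      exact ⟨hzP, fun y hy => (hx0max y hy).trans hz.ge⟩

end HQ
namespace HQ

structure Gadget (d : ℕ) where
  hd : 2 ≤ d
  P : Set (Pt d)
  s : Finset (Pt d × ℝ)
  hP : P = {x | ∀ p ∈ s, (∑ i, p.1 i * x i) ≤ p.2}
  hdim : pdim P = d
  e : Fin d → Bool → Pt d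
  m : Fin d → Bool → ℝ
  F : Fin d → Bool → Set (Pt d)
  b : Pt d → Fin d → Bool
  hFe : ∀ i ε, F i ε = {y ∈ P | dot (e i ε) y = m i ε}
  hle : ∀ i ε, ∀ y ∈ P, dot (e i ε) y ≤ m i ε
  hfacet : ∀ i ε, IsFacet P (F i ε)
  hdisj : ∀ i, F i false ∩ F i true = ∅
  hlist : ∀ G, IsFacet P G → ∃ i ε, G = F i ε
  hclass : ∀ i ε j ζ, F i ε = F j ζ → i = j ∧ ε = ζ
  hbm : ∀ i (v : Pt d), IsVertex P v → ∀ ε, (b v i = ε ↔ v ∈ F i ε)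
  hvert : ∀ x : Fin d → Bool, x ≠ (fun _ => false) → x ≠ (fun _ => true) →
      ∃ v, IsVertex P v ∧ b v = x
  hsign : ∀ v, IsVertex P v → b v ≠ (fun _ => false) ∧ b v ≠ (fun _ => true)

namespace Gadget

variable {d : ℕ} (G : Gadget d)

lemma mem_P {x : Pt d} : x ∈ G.P ↔ ∀ p ∈ G.s, dot p.1 x ≤ p.2 := by
  rw [G.hP]; exact Iff.rfl

lemma mem_F {i ε} {y : Pt d} : y ∈ G.F i ε ↔ y ∈ G.P ∧ dot (G.e i ε) y = G.m i ε := by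
  rw [G.hFe]; exact Iff.rfl

lemma F_nonempty (i ε) : (G.F i ε).Nonempty :=
  Set.nonempty_iff_ne_empty.mpr (G.hfacet i ε).2.1

lemma F_sub_P (i ε) : G.F i ε ⊆ G.P := fun y hy => (G.mem_F.mp hy).1

lemma e_ne (i ε) : G.e i ε ≠ 0 := by
  intro h
  have hF := G.hFe i ε
  rw [h] at hF
  simp only [dot_zero_left] at hF
  by_cases hm0 : 0 = G.m i ε
  · apply (G.hfacet i ε).2.2.1
    rw [hF]; ext y; simp [← hm0]
  · apply (G.hfacet i ε).2.1
    rw [hF]; ext y; simp [hm0]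

lemma finrank_pt : Module.finrank ℝ (Pt d) = d := by simp

lemma singleton_ne_P (v : Pt d) : ({v} : Set (Pt d)) ≠ G.P := by
  intro h
  have h0 : pdim ({v} : Set (Pt d)) = 0 := by
    unfold pdim
    rw [vectorSpan_singleton]
    exact finrank_bot ℝ (Pt d)
  rw [h, G.hdim] at h0
  have := G.hd
  omega

lemma vertex_exposed {v : Pt d} (hv : IsVertex G.P v) :
    v ∈ G.P ∧ ∃ c, (∀ y ∈ G.P, dot c y ≤ dot c v) ∧
      (∀ y ∈ G.P, y ≠ v → dot c y < dot c v) := by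
  rcases hv with h | h | ⟨c, h⟩
  · exact absurd h (Set.singleton_ne_empty v)
  · exact absurd h (G.singleton_ne_P v)
  · have hv : v ∈ {x ∈ G.P | ∀ y ∈ G.P, (∑ i, c i * y i) ≤ ∑ i, c i * x i} := by
      rw [← h]; rfl
    obtain ⟨hvP, hvmax⟩ := hv
    refine ⟨hvP, c, fun y hy => hvmax y hy, fun y hy hne => ?_⟩
    have : y ∉ ({v} : Set (Pt d)) := hne
    rw [h] at this
    simp only [Set.mem_setOf_eq, not_and, not_forall] at this
    obtain ⟨z, hz, hzy⟩ := this hy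
    calc dot c y < dot c z := not_le.mp hzy
    _ ≤ dot c v := hvmax z hz

lemma vertex_mem {v : Pt d} (hv : IsVertex G.P v) : v ∈ G.P := (G.vertex_exposed hv).1

lemma vertex_extreme {v u : Pt d} (hv : IsVertex G.P v)
    (h1 : v + u ∈ G.P) (h2 : v - u ∈ G.P) : u = 0 := by
  by_contra hu
  obtain ⟨hvP, c, hmax, hstrict⟩ := G.vertex_exposed hv
  have e1 : dot c (v + u) < dot c v := hstrict _ h1 (by simpa using hu)
  have e2 : dot c (v - u) < dot c v := hstrict _ h2 (by simpa [sub_eq_self] using hu)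
  rw [dot_add_right] at e1
  rw [dot_sub_right] at e2
  linarith

lemma span_P : vectorSpan ℝ G.P = ⊤ := by
  apply Submodule.eq_top_of_finrank_eq
  have := G.hdim
  unfold pdim at this
  rw [this, finrank_pt]

lemma facet_span (i : Fin d) (ε : Bool) :
    vectorSpan ℝ (G.F i ε) = LinearMap.ker (dotl (G.e i ε)) := by
  have hle' : vectorSpan ℝ (G.F i ε) ≤ LinearMap.ker (dotl (G.e i ε)) := by
    rw [vectorSpan_def]
    apply Submodule.span_le.mpr
    rintro u ⟨a, ha, b', hb, rfl⟩
    have hau := (G.mem_F.mp ha).2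
    have hbu := (G.mem_F.mp hb).2
    simp only [SetLike.mem_coe, LinearMap.mem_ker, dotl_apply, vsub_eq_sub]
    rw [dot_sub_right, hau, hbu, sub_self]
  have hkr : Module.finrank ℝ (LinearMap.ker (dotl (G.e i ε))) = d - 1 := by
    have h1 := LinearMap.finrank_range_add_finrank_ker (dotl (G.e i ε))
    have h2 : LinearMap.range (dotl (G.e i ε)) = ⊤ := by
      apply LinearMap.range_eq_top.mpr
      intro r
      refine ⟨(r / dot (G.e i ε) (G.e i ε)) • (G.e i ε), ?_⟩
      rw [dotl_apply, dot_smul_right]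
      field_simp [ne_of_gt (dot_pos_self (G.e_ne i ε))]
    rw [h2] at h1
    simp only [finrank_top, finrank_pt] at h1
    have h3 : Module.finrank ℝ ℝ = 1 := Module.finrank_self ℝ
    omega
  apply Submodule.eq_of_le_of_finrank_eq hle'
  have hfd := (G.hfacet i ε).2.2.2
  rw [G.hdim] at hfd
  unfold pdim at hfd
  rw [hkr]
  omega

/-- membership in a facet is tightness. -/
lemma tight_of_mem_F {i ε} {y : Pt d} (h : y ∈ G.F i ε) : dot (G.e i ε) y = G.m i ε :=
  (G.mem_F.mp h).2

lemma mem_F_of_tight {i ε} {y : Pt d} (hy : y ∈ G.P) (h : dot (G.e i ε) y = G.m i ε) :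
    y ∈ G.F i ε := G.mem_F.mpr ⟨hy, h⟩

end Gadget
end HQ
namespace HQ

variable {d : ℕ}

def poly (t : Finset (Pt d × ℝ)) : Set (Pt d) := {x | ∀ p ∈ t, dot p.1 x ≤ p.2}

lemma poly_anti {t t' : Finset (Pt d × ℝ)} (h : t ⊆ t') : poly t' ⊆ poly t :=
  fun _ hx p hp => hx p (h hp)

lemma exists_irredundant (s : Finset (Pt d × ℝ)) :
    ∃ s' ⊆ s, poly s' = poly s ∧ ∀ c ∈ s', poly (s'.erase c) ≠ poly s := by
  classical
  induction s using Finset.strongInductionOn with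
  | _ s ih =>
    by_cases h : ∀ c ∈ s, poly (s.erase c) ≠ poly s
    · exact ⟨s, subset_rfl, rfl, h⟩
    · push_neg at h
      obtain ⟨c, hc, hcp⟩ := h
      obtain ⟨s', hsub, hpoly, hirr⟩ := ih (s.erase c) (Finset.erase_ssubset hc)
      refine ⟨s', hsub.trans (Finset.erase_subset c s), by rw [hpoly, hcp], ?_⟩
      intro c' hc'
      rw [← hcp]
      exact hirr c' hc'

lemma small_perturb (t : Finset (Pt d × ℝ)) (w u : Pt d)
    (h : ∀ c ∈ t, dot c.1 w < c.2) :
    ∃ δ : ℝ, 0 < δ ∧ ∀ ξ : ℝ, |ξ| ≤ δ → ∀ c ∈ t, dot c.1 (w + ξ • u) ≤ c.2 := by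
  classical
  induction t using Finset.induction with
  | empty => exact ⟨1, one_pos, by simp⟩
  | @insert a t' ha ih =>
    obtain ⟨δ', hδ', hI⟩ := ih (fun c hc => h c (Finset.mem_insert_of_mem hc))
    have hsl : 0 < a.2 - dot a.1 w := sub_pos.mpr (h a (Finset.mem_insert_self a t'))
    have hpos : (0:ℝ) < |dot a.1 u| + 1 := by positivity
    set δa := (a.2 - dot a.1 w)/(|dot a.1 u| + 1) with hδa
    have hδapos : 0 < δa := div_pos hsl hpos
    refine ⟨min δ' δa, lt_min hδ' hδapos, fun ξ hξ c hc => ?_⟩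
    rcases Finset.mem_insert.mp hc with rfl | hc
    · rw [dot_add_right, dot_smul_right]
      have h1 : |ξ * dot c.1 u| ≤ δa * (|dot c.1 u| + 1) := by
        rw [abs_mul]
        apply mul_le_mul (le_trans hξ (min_le_right _ _))
          (by linarith [abs_nonneg (dot c.1 u)]) (abs_nonneg _) (le_of_lt hδapos)
      have h2 : δa * (|dot c.1 u| + 1) = c.2 - dot c.1 w := by
        rw [hδa, div_mul_cancel₀]
        exact ne_of_gt hpos
      have h3 : ξ * dot c.1 u ≤ |ξ * dot c.1 u| := le_abs_self _
      linarith
    · exact hI ξ (le_trans hξ (min_le_left _ _)) c hc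

lemma ker_dim {p : Pt d} (hp : p ≠ 0) :
    Module.finrank ℝ (LinearMap.ker (dotl p)) + 1 = d := by
  have h1 := LinearMap.finrank_range_add_finrank_ker (dotl p)
  have h2 : LinearMap.range (dotl p) = ⊤ := by
    apply LinearMap.range_eq_top.mpr
    intro r
    refine ⟨(r / dot p p) • p, ?_⟩
    rw [dotl_apply, dot_smul_right]
    field_simp [ne_of_gt (dot_pos_self hp)]
  rw [h2] at h1
  simp only [finrank_top] at h1
  have h3 : Module.finrank ℝ ℝ = 1 := Module.finrank_self ℝ
  have h4 : Module.finrank ℝ (Pt d) = d := by simp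
  omega

namespace Gadget

variable {d : ℕ} (G : Gadget d)

lemma exists_strict_point :
    ∃ z ∈ G.P, ∀ (p : Pt d) (q : ℝ), (∀ y ∈ G.P, dot p y ≤ q) → p ≠ 0 → dot p z < q := by
  classical
  have hspan : Submodule.span ℝ (G.P -ᵥ G.P) = ⊤ := by
    rw [← vectorSpan_def]; exact G.span_P
  obtain ⟨D, hDsub, hDspan, hDind⟩ := exists_linearIndependent ℝ (G.P -ᵥ G.P)
  rw [hspan] at hDspan
  have hDfin : D.Finite := hDind.setFinite
  have hrep : ∀ u : D, ∃ av ∈ G.P, ∃ bv ∈ G.P, (u : Pt d) = av - bv := by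
    rintro ⟨u, hu⟩
    obtain ⟨av, ha, bv, hb, hab⟩ := hDsub hu
    exact ⟨av, ha, bv, hb, by simpa [vsub_eq_sub] using hab.symm⟩
  choose A hA B hB hAB using hrep
  have : Fintype D := hDfin.fintype
  -- D is nonempty
  have hDne : Nonempty D := by
    by_contra hne
    have : D = ∅ := by
      ext u; simp only [Set.mem_empty_iff_false, iff_false]
      exact fun hu => hne ⟨⟨u, hu⟩⟩
    rw [this, Submodule.span_empty] at hDspan
    have h4 : Module.finrank ℝ (Pt d) = d := by simp
    have h5 : Module.finrank ℝ (Pt d) = 0 := by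
      rw [← finrank_top ℝ (Pt d), ← hDspan, finrank_bot]
    have := G.hd; omega
  set n : ℕ := Fintype.card D with hn
  have hnpos : 0 < n := Fintype.card_pos
  set z : Pt d := ((2 * n : ℝ))⁻¹ • ∑ u : D, (A u + B u) with hz
  have key : ∀ (p : Pt d) (q : ℝ), (∀ y ∈ G.P, dot p y ≤ q) →
      dot p z ≤ q ∧ (p ≠ 0 → dot p z < q) := by
    intro p q hval
    have hzval : dot p z = ((2 * n : ℝ))⁻¹ * ∑ u : D, (dot p (A u) + dot p (B u)) := by
      rw [hz, dot_smul_right]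
      congr 1
      have h0 : dot p (∑ u : D, (A u + B u)) = dotl p (∑ u : D, (A u + B u)) := rfl
      rw [h0, map_sum]
      exact Finset.sum_congr rfl fun u _ => by rw [dotl_apply, dot_add_right]
    have hterm : ∀ u : D, dot p (A u) + dot p (B u) ≤ 2 * q := fun u => by
      have := hval _ (hA u); have := hval _ (hB u); linarith
    have hsum : ∑ u : D, (dot p (A u) + dot p (B u)) ≤ (n : ℝ) * (2 * q) := by
      calc ∑ u : D, (dot p (A u) + dot p (B u)) ≤ ∑ _u : D, 2 * q :=
            Finset.sum_le_sum fun u _ => hterm u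
      _ = (n : ℝ) * (2 * q) := by rw [Finset.sum_const, Finset.card_univ]; push_cast; ring
    have h2n : (0:ℝ) < 2 * n := by positivity
    constructor
    · rw [hzval]
      rw [inv_mul_le_iff₀ h2n]
      calc ∑ u : D, (dot p (A u) + dot p (B u)) ≤ (n:ℝ) * (2 * q) := hsum
      _ = 2 * (n:ℝ) * q := by ring
    · intro hp
      by_contra hge
      have heq : dot p z = q := le_antisymm (by
        rw [hzval, inv_mul_le_iff₀ h2n]
        calc ∑ u : D, (dot p (A u) + dot p (B u)) ≤ (n:ℝ) * (2 * q) := hsum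
        _ = 2 * (n:ℝ) * q := by ring) (not_lt.mp hge)
      -- all slacks vanish
      have hsum_eq : ∑ u : D, (2 * q - (dot p (A u) + dot p (B u))) = 0 := by
        rw [Finset.sum_sub_distrib, Finset.sum_const, Finset.card_univ]
        have : ∑ u : D, (dot p (A u) + dot p (B u)) = q * (2 * n) := by
          have := heq
          rw [hzval] at this
          field_simp at this
          linarith [this]
        rw [this]
        push_cast
        ring
      have hzero : ∀ u : D, 2 * q - (dot p (A u) + dot p (B u)) = 0 := by
        intro u
        have := (Finset.sum_eq_zero_iff_of_nonneg
          (fun v (_ : v ∈ Finset.univ) => sub_nonneg.mpr (hterm v))).mp hsum_eq u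
          (Finset.mem_univ u)
        exact this
      have hperp : ∀ u : D, dot p (u : Pt d) = 0 := by
        intro u
        have h1 := hval _ (hA u)
        have h2 := hval _ (hB u)
        have h3 := hzero u
        have hAq : dot p (A u) = q := by linarith
        have hBq : dot p (B u) = q := by linarith
        rw [hAB u, dot_sub_right, hAq, hBq, sub_self]
      have hker : Submodule.span ℝ D ≤ LinearMap.ker (dotl p) := by
        apply Submodule.span_le.mpr
        intro u hu
        simp only [SetLike.mem_coe, LinearMap.mem_ker, dotl_apply]
        exact hperp ⟨u, hu⟩
      rw [hDspan, top_le_iff] at hker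
      have : dot p p = 0 := by
        have : p ∈ LinearMap.ker (dotl p) := by rw [hker]; trivial
        simpa using this
      exact hp (dot_self_eq_zero this)
  have hzP : z ∈ G.P := by
    rw [G.mem_P]
    intro c hc
    refine (key c.1 c.2 ?_).1
    intro y hy
    exact (G.mem_P.mp hy) c hc
  exact ⟨z, hzP, fun p q hval hp => (key p q hval).2 hp⟩

end Gadget
end HQ
namespace HQ
namespace Gadget

variable {d : ℕ} (G : Gadget d)

lemma P_eq_Q {y : Pt d} (hy : ∀ i ε, dot (G.e i ε) y ≤ G.m i ε) : y ∈ G.P := by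
  classical
  obtain ⟨z, hzP, hzstrict⟩ := G.exists_strict_point
  have hPpoly : G.P = poly G.s := G.hP
  obtain ⟨s', hs'sub, hs'poly, hirr⟩ := exists_irredundant G.s
  have hPs' : G.P = poly s' := by rw [hPpoly, ← hs'poly]
  have hzs' : ∀ c' ∈ s', dot c'.1 z ≤ c'.2 := by
    rw [hPs'] at hzP; exact hzP
  have claim : ∀ c ∈ s', dot c.1 y ≤ c.2 := by
    intro c hc
    by_cases hp0 : c.1 = 0
    · have h0 := hzs' c hc
      rw [hp0, dot_zero_left] at h0 ⊢
      exact h0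
    · have hval : ∀ w ∈ G.P, dot c.1 w ≤ c.2 := by
        intro w hw; rw [hPs'] at hw; exact hw c hc
      have hzlt : dot c.1 z < c.2 := hzstrict c.1 c.2 hval hp0
      have hsup : G.P ⊆ poly (s'.erase c) := by
        rw [hPs']; exact poly_anti (Finset.erase_subset c s')
      have hex : ∃ y₀, y₀ ∈ poly (s'.erase c) ∧ y₀ ∉ G.P := by
        by_contra h
        push_neg at h
        apply hirr c hc
        rw [← hPpoly]
        exact Set.Subset.antisymm (fun w hw => h w hw) hsup
      obtain ⟨y₀, hy₀e, hy₀n⟩ := hex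
      have hy₀v : c.2 < dot c.1 y₀ := by
        by_contra h
        push_neg at h
        apply hy₀n
        rw [hPs']
        intro c' hc'
        rcases eq_or_ne c' c with rfl | hne
        · exact h
        · exact hy₀e c' (Finset.mem_erase.mpr ⟨hne, hc'⟩)
      set den := dot c.1 y₀ - dot c.1 z with hden
      have hdenpos : 0 < den := by rw [hden]; linarith
      set t₀ := (c.2 - dot c.1 z) / den with ht₀
      have ht₀pos : 0 < t₀ := div_pos (by linarith) hdenpos
      have ht₀lt : t₀ < 1 := by rw [ht₀, div_lt_one hdenpos, hden]; linarith
      set w := z + t₀ • (y₀ - z) with hw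
      have hwexp : ∀ g : Pt d, dot g w = dot g z + t₀ * (dot g y₀ - dot g z) := by
        intro g; rw [hw, dot_add_right, dot_smul_right, dot_sub_right]
      have hwc : dot c.1 w = c.2 := by
        rw [hwexp, ← hden, ht₀, div_mul_cancel₀ _ (ne_of_gt hdenpos)]
        ring
      have hwP : w ∈ G.P := by
        rw [hPs']
        intro c' hc'
        rcases eq_or_ne c' c with rfl | hne
        · exact le_of_eq hwc
        · have h1 : dot c'.1 z ≤ c'.2 := hzs' c' hc'
          have h2 : dot c'.1 y₀ ≤ c'.2 := hy₀e c' (Finset.mem_erase.mpr ⟨hne, hc'⟩)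
          rw [hwexp]
          nlinarith
      have hwstrict : ∀ c' ∈ s'.erase c, c'.1 ≠ 0 → dot c'.1 w < c'.2 := by
        intro c' hc' hc'0
        have h1 : dot c'.1 z < c'.2 := by
          apply hzstrict c'.1 c'.2 _ hc'0
          intro x hx
          rw [hPs'] at hx
          exact hx c' (Finset.mem_of_mem_erase hc')
        have h2 : dot c'.1 y₀ ≤ c'.2 := hy₀e c' hc'
        rw [hwexp]
        nlinarith
      set Fw : Set (Pt d) := {x ∈ G.P | dot c.1 x = c.2} with hFw
      have hwFw : w ∈ Fw := ⟨hwP, hwc⟩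
      have hker : vectorSpan ℝ Fw = LinearMap.ker (dotl c.1) := by
        apply le_antisymm
        · rw [vectorSpan_def]
          apply Submodule.span_le.mpr
          rintro u ⟨a, ha2, b2, hb2, rfl⟩
          simp only [SetLike.mem_coe, LinearMap.mem_ker, dotl_apply, vsub_eq_sub]
          rw [dot_sub_right, ha2.2, hb2.2, sub_self]
        · intro u hu
          simp only [LinearMap.mem_ker, dotl_apply] at hu
          have hstrictset : ∀ c' ∈ (s'.erase c).filter (fun c' => c'.1 ≠ 0),
              dot c'.1 w < c'.2 := by
            intro c' hc'
            obtain ⟨hc'1, hc'2⟩ := Finset.mem_filter.mp hc'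
            exact hwstrict c' hc'1 hc'2
          obtain ⟨δ, hδpos, hδ⟩ :=
            small_perturb ((s'.erase c).filter (fun c' => c'.1 ≠ 0)) w u hstrictset
          have hmem : ∀ ξ : ℝ, |ξ| ≤ δ → w + ξ • u ∈ Fw := by
            intro ξ hξ
            refine ⟨?_, ?_⟩
            · rw [hPs']
              intro c' hc'
              rcases eq_or_ne c' c with rfl | hne
              · rw [dot_add_right, dot_smul_right, hu, mul_zero, add_zero]
                exact le_of_eq hwc
              · by_cases h0 : c'.1 = 0
                · have := hzs' c' hc'
                  rw [h0, dot_zero_left] at this ⊢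
                  exact this
                · exact hδ ξ hξ c'
                    (Finset.mem_filter.mpr ⟨Finset.mem_erase.mpr ⟨hne, hc'⟩, h0⟩)
            · rw [dot_add_right, dot_smul_right, hu, mul_zero, add_zero]
              exact hwc
          have h1 : w + δ • u ∈ Fw := hmem δ (by rw [abs_of_pos hδpos])
          have h2 : (w + δ • u) -ᵥ w ∈ vectorSpan ℝ Fw :=
            vsub_mem_vectorSpan ℝ h1 hwFw
          have hδu : δ • u ∈ vectorSpan ℝ Fw := by
            simpa [vsub_eq_sub] using h2
          have h3 := Submodule.smul_mem (vectorSpan ℝ Fw) (δ⁻¹) hδu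
          rwa [smul_smul, inv_mul_cancel₀ (ne_of_gt hδpos), one_smul] at h3
      have hface : IsFacet G.P Fw := by
        refine ⟨Or.inr (Or.inr ⟨c.1, ?_⟩), ?_, ?_, ?_⟩
        · ext x
          constructor
          · rintro ⟨hxP, hx⟩
            refine ⟨hxP, fun y' hy' => ?_⟩
            show dot c.1 y' ≤ dot c.1 x
            rw [hx]
            exact hval y' hy'
          · rintro ⟨hxP, hx⟩
            refine ⟨hxP, le_antisymm (hval x hxP) ?_⟩
            have h4 : dot c.1 w ≤ dot c.1 x := hx w hwP
            rw [hwc] at h4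
            exact h4
        · intro h; rw [h] at hwFw; exact hwFw
        · intro h
          have hzf : z ∈ Fw := by rw [h]; exact hzP
          exact absurd hzf.2 (ne_of_lt hzlt)
        · show pdim Fw + 1 = pdim G.P
          rw [G.hdim]
          unfold pdim
          rw [hker]
          exact ker_dim hp0
      obtain ⟨i, ε, hie⟩ := G.hlist Fw hface
      have hkk : LinearMap.ker (dotl c.1) = LinearMap.ker (dotl (G.e i ε)) := by
        rw [← hker, hie, G.facet_span]
      set w₀ := (dot c.1 c.1)⁻¹ • c.1 with hw₀
      have hw₀1 : dot c.1 w₀ = 1 := by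
        rw [hw₀, dot_smul_right]
        field_simp [ne_of_gt (dot_pos_self hp0)]
      set t := dot (G.e i ε) w₀ with htdef
      have hprop : ∀ u : Pt d, dot (G.e i ε) u = t * dot c.1 u := by
        intro u
        have h5 : u - (dot c.1 u) • w₀ ∈ LinearMap.ker (dotl c.1) := by
          simp only [LinearMap.mem_ker, dotl_apply]
          rw [dot_sub_right, dot_smul_right, hw₀1]
          ring
        rw [hkk] at h5
        simp only [LinearMap.mem_ker, dotl_apply] at h5
        rw [dot_sub_right, dot_smul_right] at h5
        rw [← htdef] at h5
        linarith
      have hwF : w ∈ G.F i ε := by rw [← hie]; exact hwFw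
      have hm : G.m i ε = t * c.2 := by
        have h6 := G.tight_of_mem_F hwF
        rw [hprop w, hwc] at h6
        exact h6.symm
      have ht_pos : 0 < t := by
        rcases lt_trichotomy t 0 with h | h | h
        · exfalso
          have hez : dot (G.e i ε) z < G.m i ε :=
            hzstrict (G.e i ε) (G.m i ε) (G.hle i ε) (G.e_ne i ε)
          rw [hprop z, hm] at hez
          nlinarith
        · exfalso
          apply G.e_ne i ε
          apply dot_self_eq_zero
          have h7 := hprop (G.e i ε)
          rw [h, zero_mul] at h7
          exact h7
        · exact h
      have h8 := hy i ε
      rw [hprop y, hm] at h8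
      exact (mul_le_mul_iff_right₀ ht_pos).mp h8
  rw [hPs']
  exact claim

/-- Q-membership characterization. -/
lemma mem_Q {y : Pt d} : y ∈ G.P ↔ ∀ i ε, dot (G.e i ε) y ≤ G.m i ε :=
  ⟨fun h i ε => G.hle i ε y h, G.P_eq_Q⟩

end Gadget
end HQ
namespace HQ

variable {d : ℕ}

lemma dot_neg_right (c u : Pt d) : dot c (-u) = - dot c u := by
  simp [dot]

lemma dep_perp {w : Fin d → Pt d} (h : ¬ LinearIndependent ℝ w) :
    ∃ u : Pt d, u ≠ 0 ∧ ∀ j, dot (w j) u = 0 := by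
  obtain ⟨g, hgsum, j0, hgj⟩ := Fintype.not_linearIndependent_iff.mp h
  set Φ : Pt d →ₗ[ℝ] Pt d :=
    { toFun := fun u => fun j => dot (w j) u,
      map_add' := by intro a b'; funext j; simp [dot_add_right],
      map_smul' := by intro t a; funext j; simp [dot_smul_right] } with hΦ
  have hΦap : ∀ u j, Φ u j = dot (w j) u := fun u j => rfl
  have hnots : ¬ Function.Surjective Φ := by
    intro hs
    obtain ⟨u, hu⟩ := hs (fun j => if j = j0 then 1 else 0)
    have h1 : dot g (Φ u) = 0 := by
      have h2 : dot g (Φ u) = ∑ j, g j * dot (w j) u := by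
        simp only [dot, hΦap]
      rw [h2, ← dot_sum_smul_left, hgsum, dot_zero_left]
    have h2 : dot g (Φ u) = g j0 := by
      rw [hu]
      simp [dot]
    exact hgj (by rw [← h2, h1])
  have hnoti : ¬ Function.Injective Φ := fun hi =>
    hnots ((LinearMap.injective_iff_surjective).mp hi)
  rw [Function.not_injective_iff] at hnoti
  obtain ⟨a, b', hab, hne⟩ := hnoti
  refine ⟨a - b', sub_ne_zero.mpr hne, fun j => ?_⟩
  have h3 : Φ (a - b') = 0 := by rw [map_sub, hab, sub_self]
  have h4 := congrFun h3 j
  rw [hΦap] at h4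
  exact h4

lemma indep_perp_zero {w : Fin d → Pt d} (hw : LinearIndependent ℝ w) {u : Pt d}
    (h : ∀ j, dot (w j) u = 0) : u = 0 := by
  rcases Nat.eq_zero_or_pos d with rfl | hd
  · funext j; exact j.elim0
  · have : Nonempty (Fin d) := ⟨⟨0, hd⟩⟩
    set B := basisOfLinearIndependentOfCardEqFinrank hw (by simp) with hBdef
    have hB : ∀ j, (B j) = w j := fun j => by
      rw [hBdef, coe_basisOfLinearIndependentOfCardEqFinrank]
    have hrep := B.sum_repr u
    have h0 : dot (∑ j, B.repr u j • B j) u = 0 := by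
      rw [dot_sum_smul_left]
      apply Finset.sum_eq_zero
      intro j _
      rw [hB j, h j, mul_zero]
    rw [hrep] at h0
    exact dot_self_eq_zero h0

/-- the pattern χ i ε : `!ε` at `i`, `ε` elsewhere. -/
def chi (i : Fin d) (ε : Bool) : Fin d → Bool := fun j => if j = i then !ε else ε

lemma chi_ne_const (hd : 2 ≤ d) (i : Fin d) (ε ζ : Bool) : chi i ε ≠ (fun _ => ζ) := by
  intro h
  have h1 : chi i ε i = ζ := congrFun h i
  have hcard : 1 < Fintype.card (Fin d) := by rw [Fintype.card_fin]; omega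
  obtain ⟨j, hj⟩ := Fintype.exists_ne_of_one_lt_card hcard i
  have h2 : chi i ε j = ζ := congrFun h j
  rw [chi, if_pos rfl] at h1
  rw [chi, if_neg hj] at h2
  rw [h2] at h1
  cases ε <;> simp_all

namespace Gadget

variable {d : ℕ} (G : Gadget d)

lemma not_both (i : Fin d) {y : Pt d} (h1 : y ∈ G.F i false) (h2 : y ∈ G.F i true) :
    False := by
  have h := G.hdisj i
  rw [Set.eq_empty_iff_forall_notMem] at h
  exact h y ⟨h1, h2⟩

lemma not_both' (i : Fin d) (ε : Bool) {y : Pt d} (h1 : y ∈ G.F i ε)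
    (h2 : y ∈ G.F i (!ε)) : False := by
  cases ε
  · exact G.not_both i h1 h2
  · exact G.not_both i h2 h1

lemma vertex_on {v : Pt d} (hv : IsVertex G.P v) (i : Fin d) : v ∈ G.F i (G.b v i) :=
  (G.hbm i v hv (G.b v i)).mp rfl

lemma vertex_tight {v : Pt d} (hv : IsVertex G.P v) (i : Fin d) :
    dot (G.e i (G.b v i)) v = G.m i (G.b v i) :=
  G.tight_of_mem_F (G.vertex_on hv i)

lemma vertex_strict' {v : Pt d} (hv : IsVertex G.P v) (i : Fin d) (ε : Bool)
    (hne : G.b v i ≠ ε) : dot (G.e i ε) v < G.m i ε := by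
  have h1 := G.hle i ε v (G.vertex_mem hv)
  rcases lt_or_eq_of_le h1 with h | h
  · exact h
  · exfalso
    have h2 : v ∈ G.F i ε := G.mem_F_of_tight (G.vertex_mem hv) h
    have h3 : v ∈ G.F i (G.b v i) := G.vertex_on hv i
    have h4 : ε = !(G.b v i) := by
      cases hbe : G.b v i <;> cases hε : ε <;> simp_all
    rw [h4] at h2
    exact G.not_both' i (G.b v i) h3 h2

lemma vertex_indep {v : Pt d} (hv : IsVertex G.P v) :
    LinearIndependent ℝ (fun j => G.e j (G.b v j)) := by
  by_contra hdep
  obtain ⟨u, hu0, hperp⟩ := dep_perp hdep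
  classical
  set T : Finset (Pt d × ℝ) :=
    (Finset.univ.filter (fun jζ : Fin d × Bool => G.b v jζ.1 ≠ jζ.2)).image
      (fun jζ => (G.e jζ.1 jζ.2, G.m jζ.1 jζ.2)) with hT
  have hTstrict : ∀ c ∈ T, dot c.1 v < c.2 := by
    intro c hc
    obtain ⟨jζ, hjζ, rfl⟩ := Finset.mem_image.mp hc
    exact G.vertex_strict' hv jζ.1 jζ.2 (Finset.mem_filter.mp hjζ).2
  obtain ⟨δ, hδpos, hδ⟩ := small_perturb T v u hTstrict
  have hmem : ∀ ξ : ℝ, |ξ| ≤ δ → v + ξ • u ∈ G.P := by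
    intro ξ hξ
    apply G.P_eq_Q
    intro i ε
    by_cases hbe : G.b v i = ε
    · rw [dot_add_right, dot_smul_right, ← hbe, hperp i, mul_zero, add_zero, hbe]
      exact G.hle i ε v (G.vertex_mem hv)
    · exact hδ ξ hξ (G.e i ε, G.m i ε)
        (Finset.mem_image.mpr ⟨(i, ε), Finset.mem_filter.mpr ⟨Finset.mem_univ _, hbe⟩, rfl⟩)
  have h1 : v + δ • u ∈ G.P := hmem δ (by rw [abs_of_pos hδpos])
  have h2 : v - δ • u ∈ G.P := by
    have := hmem (-δ) (by rw [abs_neg, abs_of_pos hδpos])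
    rwa [neg_smul, ← sub_eq_add_neg] at this
  have h3 := G.vertex_extreme hv h1 h2
  rcases smul_eq_zero.mp h3 with h | h
  · exact absurd h (ne_of_gt hδpos)
  · exact hu0 h

lemma exists_vertex : ∃ v, IsVertex G.P v := by
  have h2 : (0:ℕ) < d := by have := G.hd; omega
  obtain ⟨v, hv, _⟩ := G.hvert (chi ⟨0, h2⟩ false)
    (chi_ne_const G.hd _ _ _) (chi_ne_const G.hd _ _ _)
  exact ⟨v, hv⟩

/-- Moving from a fully-tight point `p` along `u` (nonpositive slopes on the
pattern constraints, some constraint has positive slope) produces a point of `P`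
tight on the flipped constraint of some class `j*`, preserving zero-slope tightness. -/
lemma crossing {p : Pt d} {x : Fin d → Bool} {u : Pt d} (hp : p ∈ G.P)
    (ht : ∀ j, dot (G.e j (x j)) p = G.m j (x j))
    (hnonpos : ∀ j, dot (G.e j (x j)) u ≤ 0)
    (hpos : ∃ jζ : Fin d × Bool, 0 < dot (G.e jζ.1 jζ.2) u) :
    ∃ (p' : Pt d) (js : Fin d), p' ∈ G.P ∧
      dot (G.e js (!(x js))) p' = G.m js (!(x js)) ∧
      0 < dot (G.e js (!(x js))) u ∧
      (∀ j, dot (G.e j (x j)) u = 0 → dot (G.e j (x j)) p' = G.m j (x j)) := by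
  classical
  set T := Finset.univ.filter (fun jζ : Fin d × Bool => 0 < dot (G.e jζ.1 jζ.2) u) with hTd
  have hTne : T.Nonempty := by
    obtain ⟨jζ, h⟩ := hpos
    exact ⟨jζ, Finset.mem_filter.mpr ⟨Finset.mem_univ _, h⟩⟩
  set f : Fin d × Bool → ℝ :=
    fun jζ => (G.m jζ.1 jζ.2 - dot (G.e jζ.1 jζ.2) p) / dot (G.e jζ.1 jζ.2) u with hfd
  obtain ⟨js, hjsT, hjsmin⟩ := Finset.exists_min_image T f hTne
  have hjs_pos : 0 < dot (G.e js.1 js.2) u := (Finset.mem_filter.mp hjsT).2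
  have hflip : ∀ jζ ∈ T, jζ.2 = !(x jζ.1) := by
    intro jζ hjζ
    have hp0 := (Finset.mem_filter.mp hjζ).2
    by_contra hne
    have heq : jζ.2 = x jζ.1 := by
      cases hζ : jζ.2 <;> cases hx : x jζ.1 <;> simp_all
    rw [heq] at hp0
    exact absurd (hnonpos jζ.1) (not_le.mpr hp0)
  have hstrict : ∀ jζ ∈ T, dot (G.e jζ.1 jζ.2) p < G.m jζ.1 jζ.2 := by
    intro jζ hjζ
    have hle' := G.hle jζ.1 jζ.2 p hp
    rcases lt_or_eq_of_le hle' with h | h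
    · exact h
    · exfalso
      have h1 : p ∈ G.F jζ.1 jζ.2 := G.mem_F_of_tight hp h
      have h2 : p ∈ G.F jζ.1 (x jζ.1) := G.mem_F_of_tight hp (ht jζ.1)
      rw [hflip jζ hjζ] at h1
      exact G.not_both' jζ.1 (x jζ.1) h2 h1
  set ts := f js with hts
  have htspos : 0 < ts := div_pos (sub_pos.mpr (hstrict js hjsT)) hjs_pos
  set p' := p + ts • u with hp'd
  have hexp : ∀ g : Pt d, dot g p' = dot g p + ts * dot g u := by
    intro g; rw [hp'd, dot_add_right, dot_smul_right]
  have hp'P : p' ∈ G.P := by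
    apply G.P_eq_Q
    intro i ε
    rw [hexp]
    by_cases hsl : 0 < dot (G.e i ε) u
    · have hmem : (i, ε) ∈ T := Finset.mem_filter.mpr ⟨Finset.mem_univ _, hsl⟩
      have hminle : ts ≤ f (i, ε) := hjsmin (i, ε) hmem
      have : ts * dot (G.e i ε) u ≤ G.m i ε - dot (G.e i ε) p := by
        rw [← div_mul_cancel₀ (G.m i ε - dot (G.e i ε) p) (ne_of_gt hsl)]
        exact mul_le_mul_of_nonneg_right hminle (le_of_lt hsl)
      linarith
    · push_neg at hsl
      have h1 := G.hle i ε p hp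
      nlinarith
  have hjs_tight : dot (G.e js.1 js.2) p' = G.m js.1 js.2 := by
    rw [hexp, hts, hfd]
    field_simp
    ring
  refine ⟨p', js.1, hp'P, ?_, ?_, ?_⟩
  · rw [← hflip js hjsT]; exact hjs_tight
  · rw [← hflip js hjsT]; exact hjs_pos
  · intro j hj
    rw [hexp, hj, mul_zero, add_zero]
    exact ht j

/-- If a whole one-per-class sign pattern x is tight at some point of P, then x is
the sign vector of an actual vertex. -/
lemma pattern_realized {p : Pt d} (hp : p ∈ G.P) (x : Fin d → Bool)
    (ht : ∀ j, dot (G.e j (x j)) p = G.m j (x j)) :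
    ∃ v, IsVertex G.P v ∧ G.b v = x := by
  classical
  by_cases hind : LinearIndependent ℝ (fun j => G.e j (x j))
  · set c : Pt d := ∑ j, G.e j (x j) with hc
    have hcval : ∀ y : Pt d, dot c y = ∑ j, dot (G.e j (x j)) y := by
      intro y
      rw [hc]
      have h5 : (∑ j, G.e j (x j)) = ∑ j, (1:ℝ) • G.e j (x j) := by simp
      rw [h5, dot_sum_smul_left]
      simp
    have hvert : IsVertex G.P p := by
      right; right
      refine ⟨c, ?_⟩
      ext q
      simp only [Set.mem_singleton_iff, Set.mem_setOf_eq]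
      constructor
      · intro hq
        subst hq
        refine ⟨hp, fun y hy => ?_⟩
        show dot c y ≤ dot c q
        rw [hcval, hcval]
        apply Finset.sum_le_sum
        intro j _
        rw [ht j]
        exact G.hle j (x j) y hy
      · rintro ⟨hqP, hq⟩
        have h1 : dot c p ≤ dot c q := hq p hp
        have h3 : ∀ j, dot (G.e j (x j)) q = G.m j (x j) := by
          by_contra hcon
          push_neg at hcon
          obtain ⟨j1, hj1⟩ := hcon
          have hlt : dot (G.e j1 (x j1)) q < G.m j1 (x j1) :=
            lt_of_le_of_ne (G.hle j1 (x j1) q hqP) hj1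
          have h6 : dot c q < dot c p := by
            rw [hcval, hcval]
            apply Finset.sum_lt_sum
            · intro j _
              rw [ht j]
              exact G.hle j (x j) q hqP
            · exact ⟨j1, Finset.mem_univ j1, by rw [ht j1]; exact hlt⟩
          linarith
        have h4 : ∀ j, dot (G.e j (x j)) (q - p) = 0 := by
          intro j
          rw [dot_sub_right, h3 j, ht j, sub_self]
        exact sub_eq_zero.mp (indep_perp_zero hind h4)
    refine ⟨p, hvert, funext fun i => ?_⟩
    exact (G.hbm i p hvert (x i)).mpr (G.mem_F_of_tight hp (ht i))
  · exfalso
    obtain ⟨u, hu0, hperp⟩ := dep_perp hind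
    have hex : ∃ u' : Pt d, (∀ j, dot (G.e j (x j)) u' = 0) ∧
        ∃ jζ : Fin d × Bool, 0 < dot (G.e jζ.1 jζ.2) u' := by
      by_cases hcase : ∃ jζ : Fin d × Bool, 0 < dot (G.e jζ.1 jζ.2) u
      · exact ⟨u, hperp, hcase⟩
      · push_neg at hcase
        have hall : ∃ jζ : Fin d × Bool, dot (G.e jζ.1 jζ.2) u < 0 := by
          by_contra hno
          push_neg at hno
          apply hu0
          obtain ⟨v0, hv0⟩ := G.exists_vertex
          apply indep_perp_zero (G.vertex_indep hv0)
          intro j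
          exact le_antisymm (hcase (j, G.b v0 j)) (hno (j, G.b v0 j))
        obtain ⟨jζ, hjζ⟩ := hall
        refine ⟨-u, fun j => by rw [dot_neg_right, hperp j, neg_zero], jζ, ?_⟩
        rw [dot_neg_right]
        linarith
    obtain ⟨u', hperp', hpos'⟩ := hex
    obtain ⟨p', js, hp'P, htight, hpos2, hpres⟩ :=
      G.crossing hp ht (fun j => le_of_eq (hperp' j)) hpos'
    have h1 : p' ∈ G.F js (!(x js)) := G.mem_F_of_tight hp'P htight
    have h2 : p' ∈ G.F js (x js) := G.mem_F_of_tight hp'P (hpres js (hperp' js))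
    exact G.not_both' js (x js) h2 h1

end Gadget
end HQ
namespace HQ

variable {d : ℕ}

lemma dot_zero_right (c : Pt d) : dot c 0 = 0 := by simp [dot]

namespace Gadget

variable {d : ℕ} (G : Gadget d)

/-- The recession ray associated to the banned flip at the vertex of pattern χ i ε. -/
lemma ray_lemma (i : Fin d) (ε : Bool) :
    ∃ r : Pt d, (∀ j ζ, dot (G.e j ζ) r ≤ 0) ∧ (∀ j, j ≠ i → dot (G.e j ε) r = 0) ∧
      dot (G.e i (!ε)) r < 0 := by
  classical
  obtain ⟨v, hv, hbv⟩ := G.hvert (chi i ε) (chi_ne_const G.hd _ _ _) (chi_ne_const G.hd _ _ _)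
  have hbj : ∀ j, j ≠ i → G.b v j = ε := by
    intro j hj
    rw [hbv]; simp [chi, hj]
  have hbi : G.b v i = !ε := by rw [hbv]; simp [chi]
  -- the family with the i-th vector replaced by 0 is dependent
  set w : Fin d → Pt d := fun j => if j = i then 0 else G.e j ε with hw
  have hwdep : ¬ LinearIndependent ℝ w := by
    rw [Fintype.not_linearIndependent_iff]
    refine ⟨fun j => if j = i then 1 else 0, ?_, i, by simp⟩
    have h5 : ∀ j : Fin d, (if j = i then (1:ℝ) else 0) • w j
        = if j = i then w i else 0 := by
      intro j
      by_cases hj : j = i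
      · subst hj; simp
      · simp [hj]
    rw [Finset.sum_congr rfl (fun j _ => h5 j), Finset.sum_ite_eq' Finset.univ i (fun _ => w i)]
    simp [hw]
  obtain ⟨u, hu0, hperp⟩ := dep_perp hwdep
  have hperp' : ∀ j, j ≠ i → dot (G.e j ε) u = 0 := by
    intro j hj
    have h6 := hperp j
    simp only [hw, if_neg hj] at h6
    exact h6
  have hi0 : dot (G.e i (!ε)) u ≠ 0 := by
    intro h
    apply hu0
    apply indep_perp_zero (G.vertex_indep hv)
    intro j
    by_cases hj : j = i
    · subst hj; rw [hbi]; exact h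
    · rw [hbj j hj]; exact hperp' j hj
  -- orient u
  obtain ⟨u', hperp'', hneg', hu'0⟩ :
      ∃ u' : Pt d, (∀ j, j ≠ i → dot (G.e j ε) u' = 0) ∧
        dot (G.e i (!ε)) u' < 0 ∧ u' ≠ 0 := by
    rcases lt_or_gt_of_ne hi0 with h | h
    · exact ⟨u, hperp', h, hu0⟩
    · refine ⟨-u, fun j hj => by rw [dot_neg_right, hperp' j hj, neg_zero], ?_, neg_ne_zero.mpr hu0⟩
      rw [dot_neg_right]; linarith
  refine ⟨u', ?_, hperp'', hneg'⟩
  by_contra hcon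
  push_neg at hcon
  obtain ⟨j1, ζ1, hj1⟩ := hcon
  have hnonpos : ∀ j, dot (G.e j (G.b v j)) u' ≤ 0 := by
    intro j
    by_cases hj : j = i
    · subst hj; rw [hbi]; exact le_of_lt hneg'
    · rw [hbj j hj]; exact le_of_eq (hperp'' j hj)
  obtain ⟨p', js, hp'P, htight, hpos2, hpres⟩ :=
    G.crossing (G.vertex_mem hv) (G.vertex_tight hv) hnonpos ⟨(j1, ζ1), hj1⟩
  by_cases hjsi : js = i
  · -- full constant-ε pattern is tight at p'
    rw [hjsi] at htight
    rw [hbi, Bool.not_not] at htight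
    have hconst : ∀ j, dot (G.e j ε) p' = G.m j ε := by
      intro j
      by_cases hj : j = i
      · subst hj; exact htight
      · have h8 := hpres j (by rw [hbj j hj]; exact hperp'' j hj)
        rwa [hbj j hj] at h8
    obtain ⟨v', hv', hbv'⟩ := G.pattern_realized hp'P (fun _ => ε) hconst
    cases ε
    · exact (G.hsign v' hv').1 hbv'
    · exact (G.hsign v' hv').2 hbv'
  · -- two facets of class js both contain p'
    have h1 : p' ∈ G.F js (!(G.b v js)) := G.mem_F_of_tight hp'P htight
    have h2 : p' ∈ G.F js (G.b v js) :=
      G.mem_F_of_tight hp'P (hpres js (by rw [hbj js hjsi]; exact hperp'' js hjsi))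
    exact G.not_both' js (G.b v js) h2 h1

lemma dependent_contra (ζ : Bool) (hdep : ¬ LinearIndependent ℝ (fun j => G.e j ζ)) :
    False := by
  classical
  obtain ⟨g, hgsum, j0, hgj⟩ := Fintype.not_linearIndependent_iff.mp hdep
  -- all coefficients of the dependency are nonzero
  have hall : ∀ j, g j ≠ 0 := by
    intro j hj
    obtain ⟨v, hv, hbv⟩ := G.hvert (chi j ζ) (chi_ne_const G.hd _ _ _) (chi_ne_const G.hd _ _ _)
    have hind := G.vertex_indep hv
    rw [hbv] at hind
    have h5 : ∑ k, g k • G.e k (chi j ζ k) = 0 := by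
      rw [← hgsum]
      apply Finset.sum_congr rfl
      intro k _
      by_cases hk : k = j
      · subst hk; rw [hj]; simp
      · congr 1
        simp [chi, hk]
    have := Fintype.linearIndependent_iff.mp hind g h5 j0
    exact hgj this
  have hgdot : ∀ y : Pt d, ∑ j, g j * dot (G.e j ζ) y = 0 := by
    intro y
    rw [← dot_sum_smul_left, hgsum, dot_zero_left]
  by_cases hsame : (∀ j, 0 < g j) ∨ (∀ j, g j < 0)
  · -- same-sign dependency: contradict with the ray of class j0
    obtain ⟨r, hr1, _, hr3⟩ := G.ray_lemma j0 (!ζ)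
    rw [Bool.not_not] at hr3
    have h0 := hgdot r
    rcases hsame with hpos | hneg
    · have hlt : ∑ j, g j * dot (G.e j ζ) r < 0 := by
        have := Finset.sum_lt_sum (s := Finset.univ)
          (f := fun j => g j * dot (G.e j ζ) r) (g := fun _ => (0:ℝ))
          (fun j _ => mul_nonpos_iff.mpr (Or.inl ⟨le_of_lt (hpos j), hr1 j ζ⟩))
          ⟨j0, Finset.mem_univ j0, mul_neg_of_pos_of_neg (hpos j0) hr3⟩
        simpa using this
      linarith
    · have hlt : 0 < ∑ j, g j * dot (G.e j ζ) r := by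
        have := Finset.sum_lt_sum (s := Finset.univ)
          (f := fun _ => (0:ℝ)) (g := fun j => g j * dot (G.e j ζ) r)
          (fun j _ => mul_nonneg_iff.mpr (Or.inr ⟨le_of_lt (hneg j), hr1 j ζ⟩))
          ⟨j0, Finset.mem_univ j0, mul_pos_of_neg_of_neg (hneg j0) hr3⟩
        simpa using this
      linarith
  · -- mixed signs
    push_neg at hsame
    obtain ⟨⟨ja, hja⟩, ⟨jb, hjb⟩⟩ := hsame
    have hjaneg : g ja < 0 := lt_of_le_of_ne hja (hall ja)
    have hjbpos : 0 < g jb := lt_of_le_of_ne hjb (Ne.symm (hall jb))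
    have hjanlt : ¬ 0 < g ja := not_lt.mpr (le_of_lt hjaneg)
    set xp : Fin d → Bool := fun j => if 0 < g j then ζ else !ζ with hxp
    set xm : Fin d → Bool := fun j => if 0 < g j then !ζ else ζ with hxm
    have hxpne : ∀ c, xp ≠ fun _ => c := by
      intro c h
      have h1 : xp jb = c := congrFun h jb
      have h2 : xp ja = c := congrFun h ja
      rw [hxp] at h1 h2
      simp only [if_pos hjbpos] at h1
      simp only [if_neg hjanlt] at h2
      rw [← h1] at h2
      cases ζ <;> simp at h2
    have hxmne : ∀ c, xm ≠ fun _ => c := by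
      intro c h
      have h1 : xm jb = c := congrFun h jb
      have h2 : xm ja = c := congrFun h ja
      rw [hxm] at h1 h2
      simp only [if_pos hjbpos] at h1
      simp only [if_neg hjanlt] at h2
      rw [← h1] at h2
      cases ζ <;> simp at h2
    obtain ⟨vp, hvp, hbvp⟩ := G.hvert xp (hxpne _) (hxpne _)
    obtain ⟨vm, hvm, hbvm⟩ := G.hvert xm (hxmne _) (hxmne _)
    have hself : ∀ j, 0 < g j → dot (G.e j ζ) vp = G.m j ζ := by
      intro j hgt
      have hb : G.b vp j = ζ := by rw [hbvp, hxp]; simp only [if_pos hgt]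
      have ht := G.vertex_tight hvp j
      rwa [hb] at ht
    have hselfm : ∀ j, ¬ 0 < g j → dot (G.e j ζ) vm = G.m j ζ := by
      intro j hgt
      have hb : G.b vm j = ζ := by rw [hbvm, hxm]; simp only [if_neg hgt]
      have ht := G.vertex_tight hvm j
      rwa [hb] at ht
    have hKzero : ∀ y : Pt d, ∑ j, g j * (G.m j ζ - dot (G.e j ζ) y) = ∑ j, g j * G.m j ζ := by
      intro y
      rw [Finset.sum_congr rfl (fun j _ => mul_sub (g j) _ _), Finset.sum_sub_distrib,
        hgdot y, sub_zero]
    have hKle : ∑ j, g j * G.m j ζ ≤ 0 := by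
      rw [← hKzero vp]
      apply Finset.sum_nonpos
      intro j _
      by_cases hgt : 0 < g j
      · rw [hself j hgt, sub_self, mul_zero]
      · have hgneg : g j < 0 := lt_of_le_of_ne (not_lt.mp hgt) (hall j)
        have hsl : 0 ≤ G.m j ζ - dot (G.e j ζ) vp :=
          sub_nonneg.mpr (G.hle j ζ vp (G.vertex_mem hvp))
        exact mul_nonpos_iff.mpr (Or.inr ⟨le_of_lt hgneg, hsl⟩)
    have hKge : 0 ≤ ∑ j, g j * G.m j ζ := by
      rw [← hKzero vm]
      apply Finset.sum_nonneg
      intro j _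
      by_cases hgt : 0 < g j
      · have hsl : 0 ≤ G.m j ζ - dot (G.e j ζ) vm :=
          sub_nonneg.mpr (G.hle j ζ vm (G.vertex_mem hvm))
        exact mul_nonneg (le_of_lt hgt) hsl
      · rw [hselfm j hgt, sub_self, mul_zero]
    have hK0 : ∑ j, g j * G.m j ζ = 0 := le_antisymm hKle hKge
    have hnonneg : ∀ k : Fin d, 0 ≤ -(g k * (G.m k ζ - dot (G.e k ζ) vp)) := by
      intro k
      by_cases hgt : 0 < g k
      · rw [hself k hgt, sub_self, mul_zero, neg_zero]
      · have hgneg : g k < 0 := lt_of_le_of_ne (not_lt.mp hgt) (hall k)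
        have hsl : 0 ≤ G.m k ζ - dot (G.e k ζ) vp :=
          sub_nonneg.mpr (G.hle k ζ vp (G.vertex_mem hvp))
        nlinarith
    have hja_tight : dot (G.e ja ζ) vp = G.m ja ζ := by
      have hsum0 : ∑ j, -(g j * (G.m j ζ - dot (G.e j ζ) vp)) = 0 := by
        rw [Finset.sum_neg_distrib, hKzero vp, hK0, neg_zero]
      have h9 := (Finset.sum_eq_zero_iff_of_nonneg
        (fun k _ => hnonneg k)).mp hsum0 ja (Finset.mem_univ ja)
      have h10 : g ja * (G.m ja ζ - dot (G.e ja ζ) vp) = 0 := by linarith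
      rcases mul_eq_zero.mp h10 with h | h
      · exact absurd h (hall ja)
      · linarith
    have hmem := G.mem_F_of_tight (G.vertex_mem hvp) hja_tight
    have hbja := (G.hbm ja vp hvp ζ).mpr hmem
    rw [hbvp, hxp] at hbja
    simp only [if_neg hjanlt] at hbja
    cases ζ <;> simp at hbja

end Gadget
end HQ
namespace HQ
namespace Gadget

variable {d : ℕ} (G : Gadget d)

lemma independent_contra
    (h0 : LinearIndependent ℝ (fun j => G.e j false))
    (h1 : LinearIndependent ℝ (fun j => G.e j true)) : False := by
  classical
  have hne : Nonempty (Fin d) := ⟨⟨0, by have := G.hd; omega⟩⟩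
  have hρ : ∀ i : Fin d, ∃ r : Pt d, (∀ j ζ, dot (G.e j ζ) r ≤ 0) ∧
      (∀ j, j ≠ i → dot (G.e j false) r = 0) ∧ dot (G.e i true) r < 0 := by
    intro i
    obtain ⟨r, a, b, c⟩ := G.ray_lemma i false
    exact ⟨r, a, b, by simpa using c⟩
  choose ρ hρ1 hρ2 hρ3 using hρ
  have hσ : ∀ i : Fin d, ∃ r : Pt d, (∀ j ζ, dot (G.e j ζ) r ≤ 0) ∧
      (∀ j, j ≠ i → dot (G.e j true) r = 0) ∧ dot (G.e i false) r < 0 := by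
    intro i
    obtain ⟨r, a, b, c⟩ := G.ray_lemma i true
    exact ⟨r, a, b, by simpa using c⟩
  choose σ hσ1 hσ2 hσ3 using hσ
  have ha : ∀ i, dot (G.e i false) (ρ i) < 0 := by
    intro i
    rcases lt_or_eq_of_le (hρ1 i i false) with h | h
    · exact h
    · exfalso
      have hz : ρ i = 0 := by
        apply indep_perp_zero h0
        intro j
        by_cases hj : j = i
        · subst hj; exact h
        · exact hρ2 i j hj
      have h9 := hρ3 i
      rw [hz, dot_zero_right] at h9
      linarith
  have hbneg : ∀ i, dot (G.e i true) (σ i) < 0 := by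
    intro i
    rcases lt_or_eq_of_le (hσ1 i i true) with h | h
    · exact h
    · exfalso
      have hz : σ i = 0 := by
        apply indep_perp_zero h1
        intro j
        by_cases hj : j = i
        · subst hj; exact h
        · exact hσ2 i j hj
      have h9 := hσ3 i
      rw [hz, dot_zero_right] at h9
      linarith
  set B0 := basisOfLinearIndependentOfCardEqFinrank h0 (by simp) with hB0
  set B1 := basisOfLinearIndependentOfCardEqFinrank h1 (by simp) with hB1
  have hB0c : ∀ j, B0 j = G.e j false := fun j => by
    rw [hB0, coe_basisOfLinearIndependentOfCardEqFinrank]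
  have hB1c : ∀ j, B1 j = G.e j true := fun j => by
    rw [hB1, coe_basisOfLinearIndependentOfCardEqFinrank]
  set CC : Fin d → Fin d → ℝ := fun j i => B0.repr (G.e j true) i with hCC
  set DD : Fin d → Fin d → ℝ := fun j i => B1.repr (G.e j false) i with hDD
  have hCexp : ∀ j, G.e j true = ∑ i, CC j i • G.e i false := by
    intro j
    conv_lhs => rw [← B0.sum_repr (G.e j true)]
    exact Finset.sum_congr rfl fun i _ => by rw [hB0c i]
  have hDexp : ∀ j, G.e j false = ∑ i, DD j i • G.e i true := by
    intro j
    conv_lhs => rw [← B1.sum_repr (G.e j false)]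
    exact Finset.sum_congr rfl fun i _ => by rw [hB1c i]
  have hCnonneg : ∀ j i, 0 ≤ CC j i := by
    intro j i
    have hpair : dot (G.e j true) (ρ i) = CC j i * dot (G.e i false) (ρ i) := by
      conv_lhs => rw [hCexp j]
      rw [dot_sum_smul_left, Finset.sum_eq_single i]
      · intro k _ hk
        rw [hρ2 i k hk, mul_zero]
      · intro h; exact absurd (Finset.mem_univ i) h
    by_contra hneg
    push_neg at hneg
    have h2 : 0 < CC j i * dot (G.e i false) (ρ i) := mul_pos_of_neg_of_neg hneg (ha i)
    rw [← hpair] at h2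
    exact absurd h2 (not_lt.mpr (hρ1 i j true))
  have hDnonneg : ∀ j i, 0 ≤ DD j i := by
    intro j i
    have hpair : dot (G.e j false) (σ i) = DD j i * dot (G.e i true) (σ i) := by
      conv_lhs => rw [hDexp j]
      rw [dot_sum_smul_left, Finset.sum_eq_single i]
      · intro k _ hk
        rw [hσ2 i k hk, mul_zero]
      · intro h; exact absurd (Finset.mem_univ i) h
    by_contra hneg
    push_neg at hneg
    have h2 : 0 < DD j i * dot (G.e i true) (σ i) := mul_pos_of_neg_of_neg hneg (hbneg i)
    rw [← hpair] at h2
    exact absurd h2 (not_lt.mpr (hσ1 i j false))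
  have hCD : ∀ j k, ∑ i, CC j i * DD i k = if j = k then 1 else 0 := by
    intro j k
    have hexp2 : G.e j true = ∑ kk, (∑ i, CC j i * DD i kk) • G.e kk true := by
      rw [hCexp j]
      calc ∑ i, CC j i • G.e i false
          = ∑ i, CC j i • ∑ kk, DD i kk • G.e kk true := by
            apply Finset.sum_congr rfl; intro i _
            rw [← hDexp i]
        _ = ∑ i, ∑ kk, (CC j i * DD i kk) • G.e kk true := by
            apply Finset.sum_congr rfl; intro i _
            rw [Finset.smul_sum]
            apply Finset.sum_congr rfl; intro kk _
            rw [smul_smul]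
        _ = ∑ kk, ∑ i, (CC j i * DD i kk) • G.e kk true := Finset.sum_comm
        _ = ∑ kk, (∑ i, CC j i * DD i kk) • G.e kk true := by
            apply Finset.sum_congr rfl; intro kk _
            rw [← Finset.sum_smul]
    have hδ : ∑ kk, (if j = kk then (1:ℝ) else 0) • G.e kk true = G.e j true := by
      have h7 : ∀ kk, (if j = kk then (1:ℝ) else 0) • G.e kk true
          = if j = kk then G.e kk true else 0 := by
        intro kk; split <;> simp
      rw [Finset.sum_congr rfl (fun kk _ => h7 kk),
        Finset.sum_ite_eq Finset.univ j (fun kk => G.e kk true)]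
      simp
    have hzero : ∑ kk, ((∑ i, CC j i * DD i kk) - (if j = kk then 1 else 0)) • G.e kk true
        = 0 := by
      rw [Finset.sum_congr rfl (fun kk _ => sub_smul _ _ _), Finset.sum_sub_distrib, hδ,
        ← hexp2, sub_self]
    have h8 := Fintype.linearIndependent_iff.mp h1 _ hzero k
    have h9 : (∑ i, CC j i * DD i k) - (if j = k then 1 else 0) = 0 := h8
    linarith [h9]
  obtain ⟨j1⟩ := hne
  have h1sum := hCD j1 j1
  rw [if_pos rfl] at h1sum
  have hex : ∃ i0, CC j1 i0 * DD i0 j1 ≠ 0 := by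
    by_contra h
    push_neg at h
    rw [Finset.sum_eq_zero (fun i _ => h i)] at h1sum
    norm_num at h1sum
  obtain ⟨i0, hi0⟩ := hex
  have hCne : CC j1 i0 ≠ 0 := fun h => hi0 (by rw [h, zero_mul])
  have hDne : DD i0 j1 ≠ 0 := fun h => hi0 (by rw [h, mul_zero])
  have hD0 : 0 < DD i0 j1 := lt_of_le_of_ne (hDnonneg i0 j1) (Ne.symm hDne)
  have hDrow : ∀ k, k ≠ j1 → DD i0 k = 0 := by
    intro k hk
    have hsumk := hCD j1 k
    rw [if_neg (Ne.symm hk)] at hsumk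
    have hterm := (Finset.sum_eq_zero_iff_of_nonneg
      (fun i _ => mul_nonneg (hCnonneg j1 i) (hDnonneg i k))).mp hsumk i0 (Finset.mem_univ i0)
    rcases mul_eq_zero.mp hterm with h | h
    · exact absurd h hCne
    · exact h
  have hcol : G.e i0 false = DD i0 j1 • G.e j1 true := by
    rw [hDexp i0, Finset.sum_eq_single j1]
    · intro k _ hk; rw [hDrow k hk, zero_smul]
    · intro h; exact absurd (Finset.mem_univ j1) h
  set t := DD i0 j1 with htd
  have hmax : ∀ y : Pt d, dot (G.e i0 false) y = t * dot (G.e j1 true) y := by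
    intro y; rw [hcol, dot_smul_left]
  obtain ⟨y1, hy1⟩ := G.F_nonempty j1 true
  have hy1P := G.F_sub_P j1 true hy1
  have hy1t := G.tight_of_mem_F hy1
  have hm_eq : G.m i0 false = t * G.m j1 true := by
    apply le_antisymm
    · obtain ⟨y0, hy0⟩ := G.F_nonempty i0 false
      have hy0P := G.F_sub_P i0 false hy0
      have h8 := G.tight_of_mem_F hy0
      rw [← h8, hmax y0]
      exact mul_le_mul_of_nonneg_left (G.hle j1 true y0 hy0P) (le_of_lt hD0)
    · rw [← hy1t, ← hmax y1]
      exact G.hle i0 false y1 hy1P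
  have hFeq : G.F i0 false = G.F j1 true := by
    rw [G.hFe, G.hFe]
    ext y
    simp only [Set.mem_setOf_eq]
    constructor
    · rintro ⟨hyP, hyt⟩
      refine ⟨hyP, ?_⟩
      rw [hmax y, hm_eq] at hyt
      exact mul_left_cancel₀ (ne_of_gt hD0) hyt
    · rintro ⟨hyP, hyt⟩
      refine ⟨hyP, ?_⟩
      rw [hmax y, hm_eq, hyt]
  obtain ⟨heq1, heq2⟩ := G.hclass i0 false j1 true hFeq
  exact Bool.noConfusion heq2

theorem gadget_false (H : Gadget d) : False := by
  by_cases h0 : LinearIndependent ℝ (fun j => H.e j false)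
  · by_cases h1 : LinearIndependent ℝ (fun j => H.e j true)
    · exact H.independent_contra h0 h1
    · exact H.dependent_contra true h1
  · exact H.dependent_contra false h0

end Gadget
end HQ

open HQ

/-- For `d ≥ 2`, the set of all sign vectors except the two constant ones is not
hypercube-realizable. -/
theorem complement_of_diagonal_not_realizable (d : ℕ) (hd : 2 ≤ d) :
    ¬ HypercubeRealizable
      (Set.univ \ {(fun _ => false : Fin d → Bool), (fun _ => true : Fin d → Bool)}) := by
  classical
  intro hreal
  obtain ⟨P, ⟨s, hPs⟩, hdim, _hsimple, S, b, hpart, hSfacet, hcard, hdisj, hconst, hpairs, hC⟩ :=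
    hreal
  have hCmem : ∀ x : Fin d → Bool, (∃ v, IsVertex P v ∧ b v = x) ↔
      (x ≠ (fun _ => false) ∧ x ≠ (fun _ => true)) := by
    intro x
    constructor
    · intro hx
      have hmem : x ∈ Set.univ \ {(fun _ => false : Fin d → Bool), (fun _ => true)} := by
        rw [hC]; exact hx
      simpa [Set.mem_diff] using hmem
    · intro hx
      have hmem : x ∈ Set.univ \ {(fun _ => false : Fin d → Bool), (fun _ => true)} :=
        ⟨trivial, by simp [hx.1, hx.2]⟩
      rw [hC] at hmem
      exact hmem
  have h2 : ∀ i, (S i).ncard = 2 := by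
    intro i
    rcases hcard i with h1 | h1
    · exfalso
      obtain ⟨v1, hv1, hb1⟩ := (hCmem (chi i false)).mpr
        ⟨chi_ne_const hd _ _ _, chi_ne_const hd _ _ _⟩
      obtain ⟨v2, hv2, hb2⟩ := (hCmem (chi i true)).mpr
        ⟨chi_ne_const hd _ _ _, chi_ne_const hd _ _ _⟩
      have heq := hconst i h1 v1 v2 hv1 hv2
      rw [hb1, hb2] at heq
      simp [chi] at heq
    · exact h1
  choose F1 F2 hne12 hSeq hbiff using fun i => hpairs i (h2 i)
  set Fc : Fin d → Bool → Set (Pt d) := fun i ε => if ε then F2 i else F1 i with hFc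
  have hmem1 : ∀ i ε, Fc i ε ∈ S i := by
    intro i ε
    rw [hSeq i, hFc]
    cases ε <;> simp
  have hFacet : ∀ i ε, IsFacet P (Fc i ε) := fun i ε => hSfacet i (Fc i ε) (hmem1 i ε)
  have hdisjF : ∀ i, Fc i false ∩ Fc i true = ∅ := by
    intro i
    have h3 := hdisj i (F1 i) (F2 i) (by rw [hSeq i]; simp) (by rw [hSeq i]; simp) (hne12 i)
    simpa [hFc] using h3
  have hlist : ∀ Gs, IsFacet P Gs → ∃ i ε, Gs = Fc i ε := by
    intro Gs hGs
    obtain ⟨i, hi, _⟩ := hpart Gs hGs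
    rw [hSeq i] at hi
    rcases hi with h | h
    · exact ⟨i, false, by simpa [hFc] using h⟩
    · exact ⟨i, true, by simpa [hFc] using h⟩
  have hclass : ∀ i ε j ζ, Fc i ε = Fc j ζ → i = j ∧ ε = ζ := by
    intro i ε j ζ heq
    obtain ⟨k, hk, huniq⟩ := hpart (Fc i ε) (hFacet i ε)
    have hij : i = j := by
      have ha : i = k := huniq i (hmem1 i ε)
      have hb : j = k := huniq j (by rw [heq]; exact hmem1 j ζ)
      rw [ha, hb]
    subst hij
    refine ⟨rfl, ?_⟩
    cases ε <;> cases ζ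
    · rfl
    · exfalso; apply hne12 i; simpa [hFc] using heq
    · exfalso; apply hne12 i; simpa [hFc] using heq.symm
    · rfl
  have hnorm : ∀ i ε, ∃ cμ : Pt d × ℝ, (∀ y ∈ P, dot cμ.1 y ≤ cμ.2) ∧
      Fc i ε = {y ∈ P | dot cμ.1 y = cμ.2} := by
    intro i ε
    obtain ⟨c, μ, ha, hb⟩ := face_normal (hFacet i ε).1
      (Set.nonempty_iff_ne_empty.mpr (hFacet i ε).2.1) (hFacet i ε).2.2.1
    exact ⟨(c, μ), ha, hb⟩
  choose cμ hlem hFem using hnorm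
  have hbm : ∀ i (v : Pt d), IsVertex P v → ∀ ε, (b v i = ε ↔ v ∈ Fc i ε) := by
    intro i v hv ε
    have h := hbiff i v hv
    cases ε
    · simpa [hFc] using h.1
    · simpa [hFc] using h.2
  exact HQ.Gadget.gadget_false
    { hd := hd, P := P, s := s, hP := hPs, hdim := hdim,
      e := fun i ε => (cμ i ε).1, m := fun i ε => (cμ i ε).2,
      F := Fc, b := b,
      hFe := hFem, hle := hlem,
      hfacet := hFacet, hdisj := hdisjF, hlist := hlist, hclass := hclass,
      hbm := hbm,
      hvert := fun x h1 h2 => (hCmem x).mpr ⟨h1, h2⟩,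
      hsign := fun v hv => (hCmem (b v)).mp ⟨v, hv, rfl⟩ }
end

section
/- Let C ⊆ {-1,1}^d be a multi-connected set, viewed as a subset of the vertices of the hypercube [-1,1]^d. Let F be a d'-dimensional face of the hypercube and let f^F : F → {-1,1}^{d'} be the map deleting the coordinates constant on F. Then f^F(C ∩ F) is multi-connected as a subset of {-1,1}^{d'}. -/
/-- Two vertices of the hypercube `{-1,1}^d` (encoded by `Bool`s) are adjacent
iff they differ in exactly one coordinate. -/
def cubeAdj {d : ℕ} (x y : Fin d → Bool) : Prop := ∃! i, x i ≠ y i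

/-- The face of the hypercube with free coordinates `free`, the other coordinates
being fixed to the values of `x0`. -/
def cubeFace {d : ℕ} (free : Finset (Fin d)) (x0 : Fin d → Bool) : Set (Fin d → Bool) :=
  {x | ∀ i ∉ free, x i = x0 i}

/-- The vertices of `S` are pairwise connected by paths lying entirely inside `S`. -/
def ConnIn {d : ℕ} (S : Set (Fin d → Bool)) : Prop :=
  ∀ x ∈ S, ∀ y ∈ S, Relation.ReflTransGen (fun a b => b ∈ S ∧ cubeAdj a b) x y

/-- Conditions (2) and (3) of multi-connectivity: for every face `F` of the hypercube,
both `C ∩ F` and `F \ C` are connected by edges of `F`. -/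
def FaceConds {d : ℕ} (C : Set (Fin d → Bool)) : Prop :=
  ∀ (free : Finset (Fin d)) (x0 : Fin d → Bool),
    ConnIn (C ∩ cubeFace free x0) ∧ ConnIn (cubeFace free x0 \ C)

/-- `C ⊆ {-1,1}^d` is multi-connected: `C` is empty or some `g ∈ C` can be removed
leaving a multi-connected set, and for every face `F` both `C ∩ F` and `F \ C` are
connected inside `F`. -/
inductive MultiConnected {d : ℕ} : Set (Fin d → Bool) → Prop
  | empty : FaceConds (∅ : Set (Fin d → Bool)) → MultiConnected ∅
  | step (C : Set (Fin d → Bool)) (g : Fin d → Bool) (hg : g ∈ C)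
      (h : MultiConnected (C \ {g})) (hf : FaceConds C) : MultiConnected C

open Classical in
/-- The involution of the hypercube mapping each vertex of the face to its antipode
within the face, and fixing all vertices outside the face. -/
noncomputable def flipFace {d : ℕ} (free : Finset (Fin d)) (x0 : Fin d → Bool)
    (x : Fin d → Bool) : Fin d → Bool :=
  if x ∈ cubeFace free x0 then (fun i => if i ∈ free then !(x i) else x i) else x

/-- `C ⊆ {-1,1}^d` is lopsided (totally asymmetric): whenever the antipodal involution
of a face preserves `C`, the face is fully contained in `C` or disjoint from `C`. -/
def Lopsided {d : ℕ} (C : Set (Fin d → Bool)) : Prop :=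
  ∀ (free : Finset (Fin d)) (x0 : Fin d → Bool),
    flipFace free x0 '' C = C → (C ∩ cubeFace free x0 = ∅ ∨ cubeFace free x0 ⊆ C)

/-!
On a face `F`, deleting the fixed coordinates is a bijection from `F` onto `{-1,1}^{d'}` that
preserves adjacency, and its inverse (filling in the fixed coordinates) carries each face of
`{-1,1}^{d'}` onto a subface of `F`, which is a face of `{-1,1}^d`. So intersecting the
restriction of `C` with a face, or taking its complement in a face, is the image of the
corresponding set for `C`, and the face conditions transfer. A removal order for `C`
restricts to one for the restriction of `C`, skipping the removed vertices outside `F`.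
-/

variable {d d' : ℕ}

def faceRestrict (φ : Fin d' → Fin d) (free : Finset (Fin d)) (x0 : Fin d → Bool)
    (C : Set (Fin d → Bool)) : Set (Fin d' → Bool) :=
  (· ∘ φ) '' (C ∩ cubeFace free x0)

variable {φ : Fin d' → Fin d} {free : Finset (Fin d)} {x0 : Fin d → Bool}

lemma cubeAdj.comp (hφ : Function.Injective φ) {a b : Fin d → Bool}
    (hab : ∀ i ∉ Set.range φ, a i = b i) (h : cubeAdj a b) : cubeAdj (a ∘ φ) (b ∘ φ) := by
  obtain ⟨i, hi, hunique⟩ := h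
  obtain ⟨j, rfl⟩ : i ∈ Set.range φ := by
    by_contra hi'
    exact hi (hab i hi')
  exact ⟨j, hi, fun j' hj' => hφ (hunique (φ j') hj')⟩

lemma ConnIn.image_comp (hφ : Function.Injective φ) (hrange : Set.range φ = ↑free)
    {S : Set (Fin d → Bool)} (hS : S ⊆ cubeFace free x0) (h : ConnIn S) :
    ConnIn ((· ∘ φ) '' S) := by
  rintro _ ⟨x, hx, rfl⟩ _ ⟨y, hy, rfl⟩
  have hxy := h x hx y hy
  clear hy
  suffices y ∈ S ∧ Relation.ReflTransGen
      (fun a b => b ∈ (· ∘ φ) '' S ∧ cubeAdj a b) (x ∘ φ) (y ∘ φ) from this.2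
  induction hxy with
  | refl => exact ⟨hx, .refl⟩
  | @tail b c _ hbc ih =>
    have hagree : ∀ i ∉ Set.range φ, b i = c i := fun i hi => by
      rw [hrange] at hi
      exact (hS ih.1 i hi).trans (hS hbc.1 i hi).symm
    exact ⟨hbc.1, ih.2.tail ⟨⟨c, hbc.1, rfl⟩, hbc.2.comp hφ hagree⟩⟩

lemma extend_mem_cubeFace (hrange : Set.range φ = ↑free) (y : Fin d' → Bool) :
    Function.extend φ y x0 ∈ cubeFace free x0 := fun i hi =>
  Function.extend_apply' _ _ _ (by rwa [← Set.mem_range, hrange])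

lemma bijOn_comp_cubeFace (hφ : Function.Injective φ) (hrange : Set.range φ = ↑free) :
    Set.BijOn (· ∘ φ) (cubeFace free x0) Set.univ := by
  refine Set.InvOn.bijOn (f' := fun y => Function.extend φ y x0)
    ⟨fun x hx => ?_, fun y _ => Function.extend_comp hφ y x0⟩ (Set.mapsTo_univ _ _)
    fun y _ => extend_mem_cubeFace hrange y
  funext i
  change Function.extend φ (x ∘ φ) x0 i = x i
  by_cases hi : i ∈ free
  · obtain ⟨j, rfl⟩ : i ∈ Set.range φ := hrange ▸ hi
    exact hφ.extend_apply _ _ j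
  · rw [Function.extend_apply' _ _ _ (by rwa [← Set.mem_range, hrange])]
    exact (hx i hi).symm

lemma cubeFace_image_extend (hφ : Function.Injective φ) (hrange : Set.range φ = ↑free)
    (free' : Finset (Fin d')) (y0 : Fin d' → Bool) :
    cubeFace (free'.image φ) (Function.extend φ y0 x0) =
      cubeFace free x0 ∩ (· ∘ φ) ⁻¹' cubeFace free' y0 := by
  ext x
  constructor
  · intro h
    refine ⟨fun i hi => ?_, fun j hj => ?_⟩
    · have hi' : i ∉ Set.range φ := by rwa [hrange]
      have hi'' : i ∉ free'.image φ := fun hmem => by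
        obtain ⟨j, -, rfl⟩ := Finset.mem_image.mp hmem
        exact hi' ⟨j, rfl⟩
      rw [h i hi'', Function.extend_apply' _ _ _ hi']
    · change x (φ j) = y0 j
      rw [h (φ j) (by rwa [hφ.mem_finset_image]), hφ.extend_apply]
  · rintro ⟨hface, hsub⟩ i hi
    by_cases hrng : i ∈ Set.range φ
    · obtain ⟨j, rfl⟩ := hrng
      rw [hφ.extend_apply]
      exact hsub j fun hj => hi (Finset.mem_image_of_mem φ hj)
    · rw [hface i (by rwa [hrange] at hrng), Function.extend_apply' _ _ _ hrng]

lemma faceRestrict_inter_cubeFace (hφ : Function.Injective φ) (hrange : Set.range φ = ↑free)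
    (C : Set (Fin d → Bool)) (free' : Finset (Fin d')) (y0 : Fin d' → Bool) :
    faceRestrict φ free x0 C ∩ cubeFace free' y0 =
      (· ∘ φ) '' (C ∩ cubeFace (free'.image φ) (Function.extend φ y0 x0)) := by
  rw [faceRestrict, ← Set.image_inter_preimage, cubeFace_image_extend hφ hrange, Set.inter_assoc]

lemma cubeFace_diff_faceRestrict (hφ : Function.Injective φ) (hrange : Set.range φ = ↑free)
    (C : Set (Fin d → Bool)) (free' : Finset (Fin d')) (y0 : Fin d' → Bool) :
    cubeFace free' y0 \ faceRestrict φ free x0 C =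
      (· ∘ φ) '' (cubeFace (free'.image φ) (Function.extend φ y0 x0) \ C) := by
  have hbij := bijOn_comp_cubeFace (x0 := x0) hφ hrange
  have hsubface := cubeFace_image_extend (x0 := x0) hφ hrange free' y0
  have himage : (· ∘ φ) '' cubeFace (free'.image φ) (Function.extend φ y0 x0) =
      cubeFace free' y0 := by
    rw [hsubface, Set.image_inter_preimage, hbij.image_eq, Set.univ_inter]
  rw [(hbij.injOn.mono (hsubface ▸ Set.inter_subset_left)).image_sdiff, himage, Set.inter_comm,
    ← faceRestrict_inter_cubeFace hφ hrange, Set.sdiff_inter_self_eq_sdiff]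

lemma FaceConds.faceRestrict (hφ : Function.Injective φ) (hrange : Set.range φ = ↑free)
    {C : Set (Fin d → Bool)} (hf : FaceConds C) : FaceConds (faceRestrict φ free x0 C) := by
  intro free' y0
  have hsub : cubeFace (free'.image φ) (Function.extend φ y0 x0) ⊆ cubeFace free x0 := by
    rw [cubeFace_image_extend hφ hrange]
    exact Set.inter_subset_left
  obtain ⟨hin, hout⟩ := hf (free'.image φ) (Function.extend φ y0 x0)
  rw [faceRestrict_inter_cubeFace hφ hrange, cubeFace_diff_faceRestrict hφ hrange]
  exact ⟨hin.image_comp hφ hrange (Set.inter_subset_right.trans hsub),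
    hout.image_comp hφ hrange (Set.sdiff_subset.trans hsub)⟩

lemma faceRestrict_diff_singleton (hφ : Function.Injective φ) (hrange : Set.range φ = ↑free)
    {C : Set (Fin d → Bool)} {g : Fin d → Bool} (hg : g ∈ C ∩ cubeFace free x0) :
    faceRestrict φ free x0 (C \ {g}) = faceRestrict φ free x0 C \ {g ∘ φ} := by
  have hinj := (bijOn_comp_cubeFace (x0 := x0) hφ hrange).injOn.mono (s₁ := C ∩ cubeFace free x0)
    Set.inter_subset_right
  rw [faceRestrict, faceRestrict, Set.sdiff_inter_right_comm,
    hinj.image_sdiff_subset (Set.singleton_subset_iff.mpr hg), Set.image_singleton]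

lemma faceRestrict_diff_singleton_of_notMem {C : Set (Fin d → Bool)} {g : Fin d → Bool}
    (hg : g ∉ cubeFace free x0) :
    faceRestrict φ free x0 (C \ {g}) = faceRestrict φ free x0 C := by
  rw [faceRestrict, faceRestrict, Set.sdiff_inter_right_comm,
    Set.sdiff_singleton_eq_self fun h => hg h.2]

lemma MultiConnected.faceRestrict (hφ : Function.Injective φ) (hrange : Set.range φ = ↑free)
    {C : Set (Fin d → Bool)} (hC : MultiConnected C) :
    MultiConnected (faceRestrict φ free x0 C) := by
  induction hC with
  | empty hf =>
    have hempty : _root_.faceRestrict φ free x0 ∅ = ∅ := by simp [_root_.faceRestrict]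
    exact hempty ▸ .empty (hempty ▸ hf.faceRestrict hφ hrange)
  | step C g hg _ hf ih =>
    by_cases hgF : g ∈ cubeFace free x0
    · refine .step _ (g ∘ φ) ⟨g, ⟨hg, hgF⟩, rfl⟩ ?_ (hf.faceRestrict hφ hrange)
      rwa [← faceRestrict_diff_singleton hφ hrange ⟨hg, hgF⟩]
    · rwa [faceRestrict_diff_singleton_of_notMem hgF] at ih

/-- Restriction of a multi-connected set to a face of the hypercube, after deleting
the coordinates constant on the face, is again multi-connected. -/
theorem multiConnected_face_restriction {d d' : ℕ} (C : Set (Fin d → Bool))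
    (hC : MultiConnected C) (free : Finset (Fin d)) (x0 : Fin d → Bool)
    (φ : Fin d' → Fin d) (hφ : Function.Injective φ) (hrange : Set.range φ = ↑free) :
    MultiConnected {y : Fin d' → Bool |
      ∃ x ∈ C ∩ cubeFace free x0, y = fun j => x (φ j)} := by
  have hset : {y : Fin d' → Bool | ∃ x ∈ C ∩ cubeFace free x0, y = fun j => x (φ j)} =
      faceRestrict φ free x0 C := by
    ext y
    exact exists_congr fun x => and_congr_right fun _ => eq_comm
  exact hset ▸ hC.faceRestrict hφ hrange
end

section
/- Every multi-connected subset C of {-1,1}^d is lopsided. -/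
/-!
Let the antipodal map of the face `F = cubeFace free x0` preserve `C`, and put `D = C ∩ F`;
then `D` is multi-connected relative to `F`. We show `D = ∅` or `D = F` by induction on
`dim F`. Pick a free direction `i` and record the `i`-edges of `D` by their endpoints in the
half-face `x i = x0 i`. Removing the vertices of `D` one at a time removes these edges one at a
time, and two local arguments in 3-dimensional faces show that the face conditions survive:
so the set of `i`-edges is multi-connected relative to the half-face. It is also symmetric
under the antipodal map of the half-face, hence, by induction, empty or everything. If it is
everything, `D = F`. If it is empty, then `D = ∅`, since a path in `D` from a vertex to its
antipode would have to cross an `i`-edge.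
-/

variable {d : ℕ}

section Flip

def flipAt (i : Fin d) (x : Fin d → Bool) : Fin d → Bool := Function.update x i (!x i)

variable {i j : Fin d} {x y : Fin d → Bool}

@[simp] lemma flipAt_apply_self (i : Fin d) (x : Fin d → Bool) : flipAt i x i = !x i := by
  simp [flipAt]

@[simp] lemma flipAt_apply_of_ne (h : j ≠ i) (x : Fin d → Bool) : flipAt i x j = x j := by
  simp [flipAt, h]

@[simp] lemma flipAt_flipAt (i : Fin d) (x : Fin d → Bool) : flipAt i (flipAt i x) = x := by
  ext j; by_cases h : j = i <;> simp [flipAt, Function.update_apply, h]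

lemma flipAt_comm (i j : Fin d) (x : Fin d → Bool) :
    flipAt i (flipAt j x) = flipAt j (flipAt i x) := by
  ext k
  by_cases hi : k = i <;> by_cases hj : k = j <;> simp_all [flipAt, Function.update_apply]

lemma flipAt_ne_self (i : Fin d) (x : Fin d → Bool) : flipAt i x ≠ x :=
  fun h => by simpa using congrFun h i

lemma eq_or_flipAt_eq_iff : x = y ∨ flipAt i x = y ↔ ∀ j ≠ i, x j = y j := by
  refine ⟨?_, fun h => ?_⟩
  · rintro (rfl | rfl) j hj <;> simp [hj]
  · by_cases hi : x i = y i
    · exact .inl (funext fun j => if hj : j = i then hj ▸ hi else h j hj)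
    · refine .inr (funext fun j => if hj : j = i then ?_ else by simp [hj, h j hj])
      subst hj; rw [flipAt_apply_self]; revert hi; cases x j <;> cases y j <;> simp

end Flip

lemma cubeAdj_iff_exists_eq_flipAt {x y : Fin d → Bool} : cubeAdj x y ↔ ∃ i, y = flipAt i x := by
  constructor
  · rintro ⟨i, hi, hu⟩
    refine ⟨i, funext fun j => ?_⟩
    by_cases hj : j = i
    · subst hj; rw [flipAt_apply_self]; revert hi; cases x j <;> cases y j <;> simp
    · simpa [hj, eq_comm] using not_imp_comm.1 (hu j) hj
  · rintro ⟨i, rfl⟩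
    exact ⟨i, by simp, fun j hj => by_contra fun h => hj (by simp [h])⟩

lemma cubeAdj_flipAt (i : Fin d) (x : Fin d → Bool) : cubeAdj x (flipAt i x) :=
  cubeAdj_iff_exists_eq_flipAt.2 ⟨i, rfl⟩

lemma cubeAdj.symm {x y : Fin d → Bool} (h : cubeAdj x y) : cubeAdj y x := by
  obtain ⟨i, rfl⟩ := cubeAdj_iff_exists_eq_flipAt.1 h
  simpa using cubeAdj_flipAt i (flipAt i x)

lemma cubeAdj.ne {x y : Fin d → Bool} (h : cubeAdj x y) : x ≠ y := by
  obtain ⟨i, rfl⟩ := cubeAdj_iff_exists_eq_flipAt.1 h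
  exact (flipAt_ne_self i x).symm

section Face

variable {free free' : Finset (Fin d)} {x0 x0' x z : Fin d → Bool} {i : Fin d}

lemma mem_cubeFace_self (free : Finset (Fin d)) (x0 : Fin d → Bool) : x0 ∈ cubeFace free x0 :=
  fun _ _ => rfl

lemma flipAt_mem_cubeFace (hi : i ∈ free) (hx : x ∈ cubeFace free x0) :
    flipAt i x ∈ cubeFace free x0 := fun j hj => by
  rw [flipAt_apply_of_ne (ne_of_mem_of_not_mem hi hj).symm]; exact hx j hj

lemma cubeFace_subset_cubeFace (hf : free' ⊆ free) (hx0' : x0' ∈ cubeFace free x0) :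
    cubeFace free' x0' ⊆ cubeFace free x0 := fun _ hx j hj =>
  (hx j fun h => hj (hf h)).trans (hx0' j hj)

lemma cubeFace_empty (x0 : Fin d → Bool) : cubeFace ∅ x0 = {x0} := by
  ext x
  simp only [cubeFace, Finset.notMem_empty, not_false_eq_true, forall_const,
    Set.mem_ofPred_eq, Set.mem_singleton_iff, funext_iff]

lemma mem_cubeFace_erase :
    x ∈ cubeFace (free.erase i) x0 ↔ x ∈ cubeFace free x0 ∧ x i = x0 i := by
  simp only [cubeFace, Set.mem_ofPred_eq, Finset.mem_erase, not_and_or, not_not]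
  exact ⟨fun h => ⟨fun j hj => h j (.inr hj), h i (.inl rfl)⟩,
    fun h j => (·.elim (· ▸ h.2) (h.1 j))⟩

lemma cubeAdj.exists_mem_eq_flipAt (h : cubeAdj x z) (hx : x ∈ cubeFace free x0)
    (hz : z ∈ cubeFace free x0) : ∃ j ∈ free, z = flipAt j x := by
  obtain ⟨j, rfl⟩ := cubeAdj_iff_exists_eq_flipAt.1 h
  refine ⟨j, by_contra fun hj => ?_, rfl⟩
  simpa [hx j hj] using hz j hj

def diffCoords (x z : Fin d → Bool) : Finset (Fin d) := Finset.univ.filter fun j => x j ≠ z j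

lemma mem_diffCoords {j : Fin d} : j ∈ diffCoords x z ↔ x j ≠ z j := by simp [diffCoords]

lemma mem_cubeFace_diffCoords : z ∈ cubeFace (diffCoords x z) x := fun j hj => by
  simpa [mem_diffCoords, eq_comm] using hj

lemma diffCoords_subset (hx : x ∈ cubeFace free x0) (hz : z ∈ cubeFace free x0) :
    diffCoords x z ⊆ free := fun j hj => by_contra fun hjf =>
  mem_diffCoords.1 hj ((hx j hjf).trans (hz j hjf).symm)

lemma flipFace_of_mem (hx : x ∈ cubeFace free x0) :
    flipFace free x0 x = fun j => if j ∈ free then !x j else x j := by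
  rw [flipFace, if_pos hx]

lemma flipFace_mem (hx : x ∈ cubeFace free x0) : flipFace free x0 x ∈ cubeFace free x0 :=
  fun j hj => by simp [flipFace_of_mem hx, hj, hx j hj]

lemma mapsTo_flipFace : Set.MapsTo (flipFace free x0) (cubeFace free x0) (cubeFace free x0) :=
  fun _ => flipFace_mem

lemma flipFace_apply_of_mem (hx : x ∈ cubeFace free x0) {j : Fin d} (hj : j ∈ free) :
    flipFace free x0 x j = !x j := by
  simp [flipFace_of_mem hx, hj]

lemma flipFace_flipAt (hi : i ∈ free) (hx : x ∈ cubeFace free x0) :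
    flipFace free x0 (flipAt i x) = flipAt i (flipFace free x0 x) := by
  ext j
  by_cases hji : j = i
  · subst hji; simp [flipFace_of_mem hx, flipFace_of_mem (flipAt_mem_cubeFace hi hx), hi]
  · simp [flipFace_of_mem hx, flipFace_of_mem (flipAt_mem_cubeFace hi hx), hji]

lemma flipFace_erase (hi : i ∈ free) (hx : x ∈ cubeFace (free.erase i) x0) :
    flipFace (free.erase i) x0 x = flipAt i (flipFace free x0 x) := by
  have hxF := (mem_cubeFace_erase.1 hx).1
  ext j
  by_cases hji : j = i
  · subst hji; simp [flipFace_of_mem hx, flipFace_of_mem hxF, hi]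
  · simp [flipFace_of_mem hx, flipFace_of_mem hxF, hji]

end Face

section Reach

abbrev ReachIn (S : Set (Fin d → Bool)) : (Fin d → Bool) → (Fin d → Bool) → Prop :=
  Relation.ReflTransGen fun a b => b ∈ S ∧ cubeAdj a b

variable {S T : Set (Fin d → Bool)} {a b p : Fin d → Bool}

lemma ReachIn.mono (hST : S ⊆ T) (h : ReachIn S a b) : ReachIn T a b :=
  Relation.ReflTransGen.mono (fun _ _ hab => ⟨hST hab.1, hab.2⟩) _ _ h

lemma ReachIn.of_adj (hb : b ∈ S) (hab : cubeAdj a b) : ReachIn S a b := .single ⟨hb, hab⟩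

lemma ReachIn.symm (ha : a ∈ S) (h : ReachIn S a b) : ReachIn S b a := by
  induction h with
  | refl => exact .refl
  | @tail b c hab hbc ih =>
    have hb : b ∈ S := by
      rcases hab.cases_tail with rfl | ⟨_, _, h⟩
      exacts [ha, h.1]
    exact (ReachIn.of_adj hb hbc.2.symm).trans ih

lemma ConnIn.exists_adj_of_mem_of_not_mem (hS : ConnIn S) (ha : a ∈ S) (haT : a ∈ T)
    (hb : b ∈ S) (hbT : b ∉ T) : ∃ t ∈ S, t ∈ T ∧ ∃ z ∈ S, z ∉ T ∧ cubeAdj t z := by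
  by_contra! hclosed
  suffices ∀ c, ReachIn S a c → c ∈ S ∧ c ∈ T from hbT (this b (hS a ha b hb)).2
  intro c hc
  induction hc with
  | refl => exact ⟨ha, haT⟩
  | tail _ hbc ih => exact ⟨hbc.1, by_contra fun hc => hclosed _ ih.1 ih.2 _ hbc.1 hc hbc.2⟩

lemma ConnIn.of_diff_singleton (hS : ConnIn (S \ {p}))
    (hp : p ∈ S → ∀ q ∈ S \ {p}, ∃ r ∈ S \ {p}, cubeAdj p r) : ConnIn S := by
  have lift : ∀ x ∈ S \ {p}, ∀ y ∈ S \ {p}, ReachIn S x y := fun x hx y hy =>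
    ReachIn.mono Set.sdiff_subset (hS x hx y hy)
  have from_p : p ∈ S → ∀ y ∈ S \ {p}, ReachIn S p y := fun hpS y hy => by
    obtain ⟨r, hr, hpr⟩ := hp hpS y hy
    exact (ReachIn.of_adj hr.1 hpr).trans (lift r hr y hy)
  intro x hx y hy
  by_cases hxp : x = p <;> by_cases hyp : y = p
  · rw [hxp, hyp]
  · rw [hxp] at hx ⊢; exact from_p hx y ⟨hy, hyp⟩
  · rw [hyp] at hy ⊢; exact (from_p hy x ⟨hx, hxp⟩).symm hy
  · exact lift x ⟨hx, hxp⟩ y ⟨hy, hyp⟩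

lemma ConnIn.diff_singleton (hS : ConnIn S)
    (hp : p ∈ S → ∀ q ∈ S, ∀ q' ∈ S, q ≠ p → q' ≠ p → cubeAdj p q → cubeAdj p q' →
      ReachIn (S \ {p}) q q') : ConnIn (S \ {p}) := by
  intro x hx y hy
  suffices ∀ c, ReachIn S x c →
      (c ≠ p → c ∈ S → ReachIn (S \ {p}) x c) ∧
      (c = p → ∃ q ∈ S \ {p}, cubeAdj q p ∧ ReachIn (S \ {p}) x q) from
    (this y (hS x hx.1 y hy.1)).1 hy.2 hy.1
  intro c hc
  induction hc with
  | refl => exact ⟨fun _ _ => .refl, fun h => absurd h hx.2⟩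
  | @tail b c hxb hbc ih =>
    have hbS : b ∈ S := by
      rcases hxb.cases_tail with rfl | ⟨_, _, h⟩
      exacts [hx.1, h.1]
    refine ⟨fun hcp hcS => ?_, fun hcp => ?_⟩
    · by_cases hbp : b = p
      · obtain ⟨q, hq, hqp, hxq⟩ := ih.2 hbp
        subst hbp
        exact hxq.trans (hp hbS q hq.1 c hcS hq.2 hcp hqp.symm hbc.2)
      · exact (ih.1 hbp hbS).tail ⟨⟨hcS, hcp⟩, hbc.2⟩
    · have hbp : b ≠ p := fun h => hbc.2.ne (h.trans hcp.symm)
      exact ⟨b, ⟨hbS, hbp⟩, hcp ▸ hbc.2, ih.1 hbp hbS⟩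

end Reach

section Within

variable {free : Finset (Fin d)} {x0 : Fin d → Bool}

def FaceCondsWithin (free : Finset (Fin d)) (x0 : Fin d → Bool) (D : Set (Fin d → Bool)) :
    Prop :=
  ∀ free' ⊆ free, ∀ x0' ∈ cubeFace free x0,
    ConnIn (D ∩ cubeFace free' x0') ∧ ConnIn (cubeFace free' x0' \ D)

inductive MultiConnectedWithin (free : Finset (Fin d)) (x0 : Fin d → Bool) :
    Set (Fin d → Bool) → Prop
  | empty : FaceCondsWithin free x0 ∅ → MultiConnectedWithin free x0 ∅
  | step (D : Set (Fin d → Bool)) (g : Fin d → Bool) (hg : g ∈ D) (hsub : D ⊆ cubeFace free x0)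
      (h : MultiConnectedWithin free x0 (D \ {g})) (hf : FaceCondsWithin free x0 D) :
      MultiConnectedWithin free x0 D

lemma MultiConnectedWithin.faceCondsWithin {D : Set (Fin d → Bool)}
    (h : MultiConnectedWithin free x0 D) : FaceCondsWithin free x0 D := by
  cases h with
  | empty hf => exact hf
  | step _ _ _ _ _ hf => exact hf

lemma MultiConnectedWithin.subset {D : Set (Fin d → Bool)}
    (h : MultiConnectedWithin free x0 D) : D ⊆ cubeFace free x0 := by
  cases h with
  | empty => exact Set.empty_subset _
  | step _ _ _ hsub => exact hsub

lemma FaceCondsWithin.mono {free' : Finset (Fin d)} {x0' : Fin d → Bool}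
    (h : FaceCondsWithin free x0 D) (hfree : free' ⊆ free) (hx0' : x0' ∈ cubeFace free x0) :
    FaceCondsWithin free' x0' D := fun free'' hfree'' x0'' hx0'' =>
  h free'' (hfree''.trans hfree) x0'' (cubeFace_subset_cubeFace hfree hx0' hx0'')

lemma FaceConds.faceCondsWithin {C : Set (Fin d → Bool)} (hC : FaceConds C) :
    FaceCondsWithin free x0 (C ∩ cubeFace free x0) := by
  intro free' hfree' x0' hx0'
  have hsub := cubeFace_subset_cubeFace hfree' hx0'
  rw [Set.inter_assoc, Set.inter_eq_right.2 hsub, Set.sdiff_inter, Set.sdiff_eq_empty.2 hsub,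
    Set.union_empty]
  exact hC free' x0'

lemma MultiConnected.multiConnectedWithin {C : Set (Fin d → Bool)} (hC : MultiConnected C)
    (free : Finset (Fin d)) (x0 : Fin d → Bool) :
    MultiConnectedWithin free x0 (C ∩ cubeFace free x0) := by
  induction hC with
  | empty hf => simpa using MultiConnectedWithin.empty (by simpa using hf.faceCondsWithin)
  | step C g hg _ hf ih =>
    rw [← Set.inter_sdiff_right_comm] at ih
    by_cases hgF : g ∈ cubeFace free x0
    · exact .step _ g ⟨hg, hgF⟩ Set.inter_subset_right ih hf.faceCondsWithin
    · rwa [Set.sdiff_singleton_eq_self fun h => hgF h.2] at ih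

end Within

section Pairs

variable {free : Finset (Fin d)} {x0 g x y : Fin d → Bool} {i : Fin d} {D : Set (Fin d → Bool)}

def IsPair (i : Fin d) (D : Set (Fin d → Bool)) (x : Fin d → Bool) : Prop :=
  x ∈ D ∧ flipAt i x ∈ D

lemma isPair_flipAt_iff : IsPair i D (flipAt i x) ↔ IsPair i D x := by
  simp [IsPair, and_comm]

lemma isPair_congr (h : ∀ j ≠ i, x j = y j) : IsPair i D x ↔ IsPair i D y := by
  rcases eq_or_flipAt_eq_iff.2 h with rfl | rfl
  exacts [.rfl, isPair_flipAt_iff.symm]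

lemma isPair_diff_singleton_iff :
    IsPair i (D \ {g}) x ↔ IsPair i D x ∧ ¬ ∀ j ≠ i, x j = g j := by
  simp only [IsPair, Set.mem_sdiff, Set.mem_singleton_iff, ← eq_or_flipAt_eq_iff]
  tauto

/-- Each `i`-edge of `D` is recorded by its endpoint in the half-face
`cubeFace (free.erase i) x0 = {x ∈ cubeFace free x0 | x i = x0 i}`. -/
def pairSet (i : Fin d) (free : Finset (Fin d)) (x0 : Fin d → Bool) (D : Set (Fin d → Bool)) :
    Set (Fin d → Bool) :=
  {x | x ∈ cubeFace (free.erase i) x0 ∧ IsPair i D x}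

lemma pairSet_diff_singleton :
    pairSet i free x0 (D \ {g}) = pairSet i free x0 D \ {Function.update g i (x0 i)} := by
  ext x
  simp only [pairSet, Set.mem_sdiff, Set.mem_ofPred_eq, Set.mem_singleton_iff,
    isPair_diff_singleton_iff, mem_cubeFace_erase, Function.eq_update_iff]
  tauto

end Pairs

section ThreeFace

variable {free : Finset (Fin d)} {x0 x g : Fin d → Bool} {i j j' : Fin d}
  {D : Set (Fin d → Bool)}

lemma mem_cubeFace_triple {y : Fin d → Bool} (h : ∀ k, k ≠ i → k ≠ j → k ≠ j' → y k = x k) :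
    y ∈ cubeFace {i, j, j'} x := fun k hk => by
  simp only [Finset.mem_insert, Finset.mem_singleton, not_or] at hk
  exact h k hk.1 hk.2.1 hk.2.2

lemma FaceCondsWithin.connIn_cubeFace_triple (hD : FaceCondsWithin free x0 D)
    (hx : x ∈ cubeFace free x0) (hi : i ∈ free) (hj : j ∈ free) (hj' : j' ∈ free) :
    ConnIn (D ∩ cubeFace {i, j, j'} x) ∧ ConnIn (cubeFace {i, j, j'} x \ D) :=
  hD _ (by simp [Finset.insert_subset_iff, hi, hj, hj']) x hx

/-- Otherwise, in the 3-face `cubeFace {i, j, j'} x`, the vertices outside `D` with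
coordinate `j` flipped and `j'` not flipped are cut off from the other vertices outside `D`. -/
lemma FaceCondsWithin.isPair_flipAt_or_isPair_flipAt (hD : FaceCondsWithin free x0 D)
    (hx : x ∈ cubeFace free x0) (hi : i ∈ free) (hj : j ∈ free) (hj' : j' ∈ free)
    (hji : j ≠ i) (hj'i : j' ≠ i) (hjj' : j ≠ j') (hxD : IsPair i D x)
    (hdiag : IsPair i D (flipAt j (flipAt j' x))) :
    IsPair i D (flipAt j x) ∨ IsPair i D (flipAt j' x) := by
  by_contra! h
  simp only [IsPair, not_and_or] at h
  obtain ⟨a, ha, haD⟩ : ∃ a, (a = flipAt j x ∨ a = flipAt i (flipAt j x)) ∧ a ∉ D := by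
    rcases h.1 with h | h
    exacts [⟨_, .inl rfl, h⟩, ⟨_, .inr rfl, h⟩]
  obtain ⟨b, hb, hbD⟩ : ∃ b, (b = flipAt j' x ∨ b = flipAt i (flipAt j' x)) ∧ b ∉ D := by
    rcases h.2 with h | h
    exacts [⟨_, .inl rfl, h⟩, ⟨_, .inr rfl, h⟩]
  have haF : a ∈ cubeFace {i, j, j'} x :=
    mem_cubeFace_triple fun k hki hkj _ => by rcases ha with rfl | rfl <;> simp [hki, hkj]
  have hbF : b ∈ cubeFace {i, j, j'} x :=
    mem_cubeFace_triple fun k hki _ hkj' => by rcases hb with rfl | rfl <;> simp [hki, hkj']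
  have hbT : b ∉ ({flipAt j x, flipAt i (flipAt j x)} : Set _) := by
    rintro (h | h) <;> rcases hb with rfl | rfl <;> simpa [hji, hjj'] using congrFun h j
  obtain ⟨t, ht, htT, z, hz, hzT, htz⟩ :=
    (hD.connIn_cubeFace_triple hx hi hj hj').2.exists_adj_of_mem_of_not_mem ⟨haF, haD⟩
      (by rcases ha with rfl | rfl <;> simp) ⟨hbF, hbD⟩ hbT
  obtain ⟨l, hl, rfl⟩ := htz.exists_mem_eq_flipAt ht.1 hz.1
  simp only [Finset.mem_insert, Finset.mem_singleton] at hl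
  -- each of the six neighbours `flipAt l t` of `T` lies in `T` or in `D`
  rcases htT with rfl | rfl <;> rcases hl with rfl | rfl | rfl <;>
    simp_all [IsPair, flipAt_comm]

/-- Otherwise, in the 3-face `cubeFace {i, j, j'} g`, the vertex `flipAt j' g` can only reach
`flipAt i g` inside `D \ {g}` through the `i`-edge at `flipAt j (flipAt j' g)`, which
`isPair_flipAt_or_isPair_flipAt` excludes. -/
lemma FaceCondsWithin.flipAt_mem_of_not_isPair_flipAt (hD : FaceCondsWithin free x0 D)
    (hD' : FaceCondsWithin free x0 (D \ {g})) (hg : g ∈ cubeFace free x0) (hi : i ∈ free)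
    (hj : j ∈ free) (hj' : j' ∈ free) (hji : j ≠ i) (hj'i : j' ≠ i) (hjj' : j ≠ j')
    (hgD : IsPair i D g) (hj'D : flipAt j' g ∈ D) (hj'D' : flipAt i (flipAt j' g) ∉ D) :
    flipAt j g ∈ D := by
  by_contra hjD
  have hdiag : IsPair i D (flipAt j (flipAt j' g)) := by
    by_contra hdiag
    have haF : flipAt j' g ∈ cubeFace {i, j, j'} g :=
      mem_cubeFace_triple fun k _ _ hkj' => by simp [hkj']
    have hbF : flipAt i g ∈ cubeFace {i, j, j'} g :=
      mem_cubeFace_triple fun k hki _ _ => by simp [hki]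
    have hbT : flipAt i g ∉ ({flipAt j' g, flipAt j (flipAt j' g)} : Set _) := by
      rintro (h | h) <;> simpa [hj'i, hjj'.symm] using congrFun h j'
    obtain ⟨t, ht, htT, z, hz, hzT, htz⟩ :=
      (hD'.connIn_cubeFace_triple hg hi hj hj').1.exists_adj_of_mem_of_not_mem
        ⟨⟨hj'D, (flipAt_ne_self j' g)⟩, haF⟩ (by simp)
        ⟨⟨hgD.2, flipAt_ne_self i g⟩, hbF⟩ hbT
    obtain ⟨l, hl, rfl⟩ := htz.exists_mem_eq_flipAt ht.2 hz.2
    simp only [Finset.mem_insert, Finset.mem_singleton] at hl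
    rcases htT with rfl | rfl <;> rcases hl with rfl | rfl | rfl <;>
      simp_all [IsPair, flipAt_comm]
  rcases hD.isPair_flipAt_or_isPair_flipAt hg hi hj hj' hji hj'i hjj' hgD hdiag with h | h
  exacts [hjD h.1, hj'D' h.2]

end ThreeFace

lemma FaceCondsWithin.exists_flipAt_mem {free : Finset (Fin d)} {x0 a b : Fin d → Bool}
    {S : Set (Fin d → Bool)} (hS : FaceCondsWithin free x0 S) (ha : a ∈ S) (hb : b ∈ S)
    (haF : a ∈ cubeFace free x0) (hbF : b ∈ cubeFace free x0) (hab : a ≠ b) :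
    ∃ j, a j ≠ b j ∧ flipAt j a ∈ S := by
  obtain ⟨t, ht, rfl, z, hz, hza, htz⟩ :=
    (hS _ (diffCoords_subset haF hbF) a haF).1.exists_adj_of_mem_of_not_mem (T := {a})
      ⟨ha, mem_cubeFace_self _ _⟩ rfl ⟨hb, mem_cubeFace_diffCoords⟩ hab.symm
  obtain ⟨j, hj, rfl⟩ := htz.exists_mem_eq_flipAt (mem_cubeFace_self _ _) hz.2
  exact ⟨j, mem_diffCoords.1 hj, hz.1⟩

section PairSet

variable {free : Finset (Fin d)} {x0 g y : Fin d → Bool} {i : Fin d} {D : Set (Fin d → Bool)}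

lemma exists_isPair_flipAt (hD : FaceCondsWithin free x0 D)
    (hD' : FaceCondsWithin free x0 (D \ {g})) (hsub : D ⊆ cubeFace free x0) (hi : i ∈ free)
    (hgD : IsPair i D g) (hy : IsPair i (D \ {g}) y) :
    ∃ j ≠ i, g j ≠ y j ∧ IsPair i D (flipAt j g) := by
  wlog hyi : y i = g i generalizing y
  · obtain ⟨j, hji, hgy, h⟩ :=
      this (isPair_flipAt_iff.2 hy) (by rwa [flipAt_apply_self, Bool.not_eq_iff])
    exact ⟨j, hji, by simpa [hji] using hgy, h⟩
  have hyg : y ≠ g := fun h => (isPair_diff_singleton_iff.1 hy).2 fun j _ => congrFun h j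
  have hgF := hsub hgD.1
  have hyF := hsub hy.1.1
  have hfree : ∀ {k}, g k ≠ y k → k ∈ free := fun h =>
    diffCoords_subset hgF hyF (mem_diffCoords.2 h)
  obtain ⟨j', hgyj', hj'D⟩ := hD.exists_flipAt_mem hgD.1 hy.1.1 hgF hyF hyg.symm
  have hj'i : j' ≠ i := by rintro rfl; exact hgyj' hyi.symm
  by_cases hj'D' : flipAt i (flipAt j' g) ∈ D
  · exact ⟨j', hj'i, hgyj', hj'D, hj'D'⟩
  obtain ⟨j, hgyj, hjD'⟩ := hD'.exists_flipAt_mem ⟨hgD.2, flipAt_ne_self i g⟩ hy.2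
    (flipAt_mem_cubeFace hi hgF) (flipAt_mem_cubeFace hi hyF)
    fun h => hyg (by simpa using congrArg (flipAt i) h.symm)
  have hji : j ≠ i := by rintro rfl; simp [hyi] at hgyj
  replace hgyj : g j ≠ y j := by simpa [hji] using hgyj
  have hjD : flipAt i (flipAt j g) ∈ D := flipAt_comm i j g ▸ hjD'.1
  have hjj' : j ≠ j' := by rintro rfl; exact hj'D' hjD
  exact ⟨j, hji, hgyj, hD.flipAt_mem_of_not_isPair_flipAt hD' hgF hi (hfree hgyj) (hfree hgyj')
    hji hj'i hjj' hgD hj'D hj'D', hjD⟩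

lemma update_mem_cubeFace_erase (hg : g ∈ cubeFace free x0) :
    Function.update g i (x0 i) ∈ cubeFace (free.erase i) x0 := by
  refine mem_cubeFace_erase.2 ⟨fun k hk => ?_, by simp⟩
  by_cases hki : k = i
  · subst hki; simp
  · simpa [hki] using hg k hk

lemma update_mem_pairSet_iff (hg : g ∈ cubeFace free x0) :
    Function.update g i (x0 i) ∈ pairSet i free x0 D ↔ IsPair i D g :=
  (and_iff_right (update_mem_cubeFace_erase hg)).trans
    (isPair_congr fun _ hk => Function.update_of_ne hk _ _)

/-- The new vertex `Function.update g i (x0 i)` of the pair set stays attached to the old ones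
through a neighbouring `i`-edge given by `exists_isPair_flipAt`. -/
lemma connIn_pairSet_inter (hD : FaceCondsWithin free x0 D)
    (hD' : FaceCondsWithin free x0 (D \ {g})) (hsub : D ⊆ cubeFace free x0) (hi : i ∈ free)
    (hgD : IsPair i D g) {free'' : Finset (Fin d)} {x0'' : Fin d → Bool}
    (hfree'' : free'' ⊆ free.erase i)
    (hconn : ConnIn (pairSet i free x0 (D \ {g}) ∩ cubeFace free'' x0'')) :
    ConnIn (pairSet i free x0 D ∩ cubeFace free'' x0'') := by
  rw [pairSet_diff_singleton, ← Set.inter_sdiff_right_comm] at hconn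
  set p := Function.update g i (x0 i)
  have hpg : ∀ k ≠ i, p k = g k := fun k hk => Function.update_of_ne hk _ _
  refine hconn.of_diff_singleton fun hpF q hq => ?_
  have hqE' : IsPair i (D \ {g}) q :=
    (pairSet_diff_singleton.symm ▸ ⟨hq.1.1, hq.2⟩ : q ∈ pairSet i free x0 _).2
  obtain ⟨j, hji, hgqj, hjD⟩ := exists_isPair_flipAt hD hD' hsub hi hgD hqE'
  have hj : j ∈ free'' := diffCoords_subset hpF.2 hq.1.2 (mem_diffCoords.2 (by rwa [hpg j hji]))
  have hjpD : IsPair i D (flipAt j p) := by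
    refine (isPair_congr fun k hk => ?_).2 hjD
    by_cases hkj : k = j
    · subst hkj; simp [hpg k hk]
    · simp [hkj, hpg k hk]
  exact ⟨flipAt j p, ⟨⟨⟨flipAt_mem_cubeFace (hfree'' hj) hpF.1.1, hjpD⟩,
    flipAt_mem_cubeFace hj hpF.2⟩, flipAt_ne_self j p⟩, cubeAdj_flipAt j p⟩

/-- Two neighbours `flipAt j p`, `flipAt j' p` of the new vertex `p` outside the pair set stay
connected through `flipAt j' (flipAt j p)`, which is not in the pair set by
`FaceCondsWithin.isPair_flipAt_or_isPair_flipAt`. -/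
lemma connIn_cubeFace_diff_pairSet (hD : FaceCondsWithin free x0 D)
    (hsub : D ⊆ cubeFace free x0) (hi : i ∈ free) (hgD : IsPair i D g)
    {free'' : Finset (Fin d)} {x0'' : Fin d → Bool} (hfree'' : free'' ⊆ free.erase i)
    (hconn : ConnIn (cubeFace free'' x0'' \ pairSet i free x0 (D \ {g}))) :
    ConnIn (cubeFace free'' x0'' \ pairSet i free x0 D) := by
  rw [pairSet_diff_singleton] at hconn
  set p := Function.update g i (x0 i)
  set E := pairSet i free x0 D
  have hpE : p ∈ E := (update_mem_pairSet_iff (hsub hgD.1)).2 hgD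
  have hdiff : cubeFace free'' x0'' \ E = (cubeFace free'' x0'' \ (E \ {p})) \ {p} := by
    ext x
    by_cases hx : x = p
    · simp [hx, hpE]
    · simp [hx]
  rw [hdiff]
  refine hconn.diff_singleton fun hpF q hq q' hq' _ hq'p hpq hpq' => ?_
  obtain ⟨j, hj, rfl⟩ := hpq.exists_mem_eq_flipAt hpF.1 hq.1
  obtain ⟨j', hj', rfl⟩ := hpq'.exists_mem_eq_flipAt hpF.1 hq'.1
  by_cases hjj' : j = j'
  · subst hjj'; exact .refl
  have hnot : ∀ k ∈ free'', flipAt k p ∉ E \ {p} → ¬ IsPair i D (flipAt k p) :=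
    fun k hk hkE h => hkE ⟨⟨flipAt_mem_cubeFace (hfree'' hk) hpE.1, h⟩, flipAt_ne_self k p⟩
  have hdiag : flipAt j' (flipAt j p) ∈ (cubeFace free'' x0'' \ (E \ {p})) \ {p} := by
    refine ⟨⟨flipAt_mem_cubeFace hj' (flipAt_mem_cubeFace hj hpF.1), fun h => ?_⟩,
      fun h => by simpa [hjj'] using congrFun h j⟩
    obtain ⟨hji, hjF⟩ := Finset.mem_erase.1 (hfree'' hj)
    obtain ⟨hj'i, hj'F⟩ := Finset.mem_erase.1 (hfree'' hj')
    rcases hD.isPair_flipAt_or_isPair_flipAt (mem_cubeFace_erase.1 hpE.1).1 hi hj'F hjF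
      hj'i hji (Ne.symm hjj') hpE.2 h.1.2 with h' | h'
    exacts [hnot j' hj' hq'.2 h', hnot j hj hq.2 h']
  refine (ReachIn.of_adj hdiag (cubeAdj_flipAt j' _)).tail ⟨⟨hq', hq'p⟩, ?_⟩
  simpa [flipAt_comm j j'] using cubeAdj_flipAt j (flipAt j' (flipAt j p))

lemma faceCondsWithin_pairSet (hD : FaceCondsWithin free x0 D)
    (hD' : FaceCondsWithin free x0 (D \ {g})) (hsub : D ⊆ cubeFace free x0) (hi : i ∈ free)
    (hgD : IsPair i D g) (hE' : FaceCondsWithin (free.erase i) x0 (pairSet i free x0 (D \ {g}))) :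
    FaceCondsWithin (free.erase i) x0 (pairSet i free x0 D) := fun _ hfree'' x0'' hx0'' =>
  ⟨connIn_pairSet_inter hD hD' hsub hi hgD hfree'' (hE' _ hfree'' x0'' hx0'').1,
    connIn_cubeFace_diff_pairSet hD hsub hi hgD hfree'' (hE' _ hfree'' x0'' hx0'').2⟩

lemma MultiConnectedWithin.pairSet (h : MultiConnectedWithin free x0 D) (hi : i ∈ free) :
    MultiConnectedWithin (free.erase i) x0 (pairSet i free x0 D) := by
  induction h with
  | empty hf =>
    have hE : _root_.pairSet i free x0 ∅ = ∅ := by ext; simp [_root_.pairSet, IsPair]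
    rw [hE]
    exact .empty (hf.mono (Finset.erase_subset i free)
      (cubeFace_subset_cubeFace (Finset.erase_subset i free) (mem_cubeFace_self _ _)
        (mem_cubeFace_self _ _)))
  | step D g hg hsub h hf ih =>
    rw [pairSet_diff_singleton] at ih
    by_cases hgD : IsPair i D g
    · exact .step _ _ ((update_mem_pairSet_iff (hsub hg)).2 hgD) (fun _ hx => hx.1) ih
        (faceCondsWithin_pairSet hf h.faceCondsWithin hsub hi hgD
          (pairSet_diff_singleton ▸ ih.faceCondsWithin))
    · rwa [Set.sdiff_singleton_eq_self (mt (update_mem_pairSet_iff (hsub hg)).1 hgD)] at ih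

lemma mapsTo_flipFace_pairSet (hi : i ∈ free) (hsub : D ⊆ cubeFace free x0)
    (hsymm : Set.MapsTo (flipFace free x0) D D) :
    Set.MapsTo (flipFace (free.erase i) x0) (pairSet i free x0 D) (pairSet i free x0 D) := by
  rintro _ ⟨hxF, hxD, hxD'⟩
  refine ⟨flipFace_mem hxF, ?_⟩
  rw [flipFace_erase hi hxF, isPair_flipAt_iff]
  exact ⟨hsymm hxD, flipFace_flipAt hi (hsub hxD) ▸ hsymm hxD'⟩

lemma eq_cubeFace_of_pairSet_eq (hsub : D ⊆ cubeFace free x0)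
    (hE : pairSet i free x0 D = cubeFace (free.erase i) x0) : D = cubeFace free x0 :=
  hsub.antisymm fun _ hx =>
    ((update_mem_pairSet_iff hx).1 (hE ▸ update_mem_cubeFace_erase hx)).1

lemma eq_empty_of_pairSet_eq_empty (h : FaceCondsWithin free x0 D) (hsub : D ⊆ cubeFace free x0)
    (hi : i ∈ free) (hsymm : Set.MapsTo (flipFace free x0) D D) (hE : pairSet i free x0 D = ∅) :
    D = ∅ := by
  refine Set.eq_empty_of_forall_notMem fun x hx => ?_
  have hconn : ConnIn (D ∩ cubeFace free x0) := (h free subset_rfl x0 (mem_cubeFace_self _ _)).1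
  obtain ⟨t, ht, htT, z, hz, hzT, htz⟩ := hconn.exists_adj_of_mem_of_not_mem (T := {y | y i = x i})
    ⟨hx, hsub hx⟩ rfl ⟨hsymm hx, flipFace_mem (hsub hx)⟩
    (by simp [flipFace_apply_of_mem (hsub hx) hi])
  obtain ⟨l, rfl⟩ := cubeAdj_iff_exists_eq_flipAt.1 htz
  have hli : l = i := by_contra fun hli => hzT (by simpa [Ne.symm hli] using htT)
  subst hli
  exact Set.notMem_empty _ (hE ▸ (update_mem_pairSet_iff ht.2).2 ⟨ht.1, hz.1⟩)

end PairSet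

theorem MultiConnectedWithin.eq_empty_or_eq_cubeFace {free : Finset (Fin d)} {x0 : Fin d → Bool}
    {D : Set (Fin d → Bool)} (h : MultiConnectedWithin free x0 D)
    (hsymm : Set.MapsTo (flipFace free x0) D D) : D = ∅ ∨ D = cubeFace free x0 := by
  induction free using Finset.strongInduction generalizing D with
  | H free ih =>
  rcases free.eq_empty_or_nonempty with rfl | ⟨i, hi⟩
  · rw [cubeFace_empty]
    exact Set.subset_singleton_iff_eq.1 (cubeFace_empty x0 ▸ h.subset)
  rcases ih _ (Finset.erase_ssubset hi) (h.pairSet hi)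
      (mapsTo_flipFace_pairSet hi h.subset hsymm) with hE | hE
  · exact .inl (eq_empty_of_pairSet_eq_empty h.faceCondsWithin h.subset hi hsymm hE)
  · exact .inr (eq_cubeFace_of_pairSet_eq h.subset hE)

/-- Every multi-connected subset of the hypercube `{-1,1}^d` is lopsided. -/
theorem multiConnected_lopsided {d : ℕ} (C : Set (Fin d → Bool))
    (hC : MultiConnected C) : Lopsided C := by
  intro free x0 hsymm
  have hmaps : Set.MapsTo (flipFace free x0) (C ∩ cubeFace free x0) (C ∩ cubeFace free x0) :=
    ((hsymm ▸ Set.mapsTo_image _ C).mono_left Set.inter_subset_left).inter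
      (mapsTo_flipFace.mono_left Set.inter_subset_right)
  refine ((hC.multiConnectedWithin free x0).eq_empty_or_eq_cubeFace hmaps).imp id fun h => ?_
  exact h ▸ Set.inter_subset_left
end

section
/- Let C ⊆ {-1,1}^d be multi-connected, and suppose g ∈ C is such that every point of {-1,1}^d at Hamming distance 1 from g also lies in C, and moreover {-1,1}^d \ (C \ {g}) is nonempty with C \ {g} multi-connected. Then C = {-1,1}^d. -/
theorem cubeFace_univ {d : ℕ} (x0 : Fin d → Bool) : cubeFace Finset.univ x0 = Set.univ := by
  ext x
  simp [cubeFace]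

theorem cubeAdj_irrefl {d : ℕ} (x : Fin d → Bool) : ¬cubeAdj x x := by
  rintro ⟨i, hi, -⟩
  exact hi rfl

theorem ConnIn.eq_of_forall_adj_notMem {d : ℕ} {S : Set (Fin d → Bool)} (hS : ConnIn S)
    {g : Fin d → Bool} (hg : g ∈ S) (hnb : ∀ x, cubeAdj g x → x ∉ S) {y : Fin d → Bool}
    (hy : y ∈ S) : y = g := by
  rcases (hS g hg y hy).cases_head with rfl | ⟨b, ⟨hbS, hgb⟩, -⟩
  · rfl
  · exact absurd hbS (hnb b hgb)

theorem MultiConnected.faceConds {d : ℕ} {C : Set (Fin d → Bool)}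
    (h : MultiConnected C) : FaceConds C := by
  cases h with
  | empty hf => exact hf
  | step _ _ _ _ hf => exact hf

theorem MultiConnected.connIn_compl {d : ℕ} {C : Set (Fin d → Bool)}
    (h : MultiConnected C) : ConnIn Cᶜ := by
  simpa [cubeFace_univ, Set.compl_eq_univ_sdiff] using (h.faceConds Finset.univ 0).2

theorem multiConnected_full_of_all_neighbors_general {d : ℕ} (C : Set (Fin d → Bool))
    (g : Fin d → Bool) (hg : g ∈ C)
    (hnb : ∀ x, cubeAdj g x → x ∈ C)
    (hC' : MultiConnected (C \ {g})) :
    C = Set.univ := by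
  have hgS : g ∈ (C \ {g})ᶜ := fun h => h.2 rfl
  have hnbS : ∀ x, cubeAdj g x → x ∉ (C \ {g})ᶜ := fun x hgx hx =>
    hx ⟨hnb x hgx, fun hxg => cubeAdj_irrefl g (hxg ▸ hgx)⟩
  refine Set.eq_univ_of_forall fun z => by_contra fun hz => ?_
  have hzg : z = g := hC'.connIn_compl.eq_of_forall_adj_notMem hgS hnbS fun h => hz h.1
  exact hz (hzg ▸ hg)

/-- If `C` is multi-connected, `g ∈ C` has all its Hamming-distance-1 neighbours in `C`,
the complement of `C \ {g}` is nonempty and `C \ {g}` is multi-connected, then `C` is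
the full cube. -/
theorem multiConnected_full_of_all_neighbors {d : ℕ} (C : Set (Fin d → Bool))
    (hC : MultiConnected C) (g : Fin d → Bool) (hg : g ∈ C)
    (hnb : ∀ x, cubeAdj g x → x ∈ C)
    (hne : (Set.univ \ (C \ {g})).Nonempty)
    (hC' : MultiConnected (C \ {g})) :
    C = Set.univ :=
  multiConnected_full_of_all_neighbors_general C g hg hnb hC'
end

section
/- Let Q be a polytope in R^d contained in the slab -1 ≤ c^T x ≤ 0 for a linear functional c, such that exactly one vertex v of Q satisfies c^T v = -1 and the vertices with c^T x = 0 form a face of Q. Embed Q into the hyperplane x_{d+1} = 1 in R^{d+1}, let 𝒞 = {αx : x ∈ Q, α ≥ 0} be the cone over Q, and let Q' be the intersection of 𝒞 with the hyperplane c^T x = -2 (where c is extended by a zero coordinate). Then Q' is a polyhedron whose face lattice equals the face lattice of Q with all faces contained in {x : c^T x = 0} removed. -/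
/-- Embedding of `ℝ^d` into the hyperplane `x_{d+1} = 1` of `ℝ^{d+1}`. -/
def emb {d : ℕ} (x : Pt d) : Pt (d + 1) := Fin.snoc x (1 : ℝ)

/-- Central projection from the origin of `(x,1)` onto the hyperplane `c᙮y = -2`
(with `c` extended by a zero last coordinate). -/
noncomputable def projPt {d : ℕ} (c : Pt d) (x : Pt d) : Pt (d + 1) :=
  (-2 / ∑ i, c i * x i) • emb x

/-- The intersection `Q'` of the cone `𝒞 = {α(x,1) : x ∈ Q, α ≥ 0}` over the embedded
polytope with the hyperplane `c᙮y = -2`. -/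
def coneSlice {d : ℕ} (Q : Set (Pt d)) (c : Pt d) : Set (Pt (d + 1)) :=
  {y | (∃ x ∈ Q, ∃ α : ℝ, 0 ≤ α ∧ y = α • emb x) ∧
    ∑ i, (Fin.snoc c (0 : ℝ) : Pt (d + 1)) i * y i = -2}

namespace ProjAux

lemma dot_add_smul {d : ℕ} (g x y : Pt d) (s t : ℝ) :
    ∑ i, g i * (s • x + t • y) i = s * ∑ i, g i * x i + t * ∑ i, g i * y i := by
  rw [Finset.mul_sum, Finset.mul_sum, ← Finset.sum_add_distrib]
  refine Finset.sum_congr rfl fun i _ => ?_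
  simp only [Pi.add_apply, Pi.smul_apply, smul_eq_mul]
  ring

lemma dot_smul_emb {d : ℕ} (σ : Pt (d + 1)) (α : ℝ) (x : Pt d) :
    ∑ i, σ i * (α • emb x) i
      = α * ((∑ i, σ (Fin.castSucc i) * x i) + σ (Fin.last d)) := by
  rw [Fin.sum_univ_castSucc]
  simp only [emb, Pi.smul_apply, smul_eq_mul, Fin.snoc_castSucc, Fin.snoc_last]
  rw [mul_add, Finset.mul_sum]
  refine congrArg₂ _ (Finset.sum_congr rfl fun i _ => by ring) (by ring)

lemma snoc_cast {d : ℕ} (c : Pt d) (t : ℝ) :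
    (fun i => (Fin.snoc c t : Pt (d + 1)) (Fin.castSucc i)) = c := by
  funext i; simp

lemma dot_snoc_smul_emb {d : ℕ} (c : Pt d) (t α : ℝ) (x : Pt d) :
    ∑ i, (Fin.snoc c t : Pt (d + 1)) i * (α • emb x) i
      = α * ((∑ i, c i * x i) + t) := by
  rw [dot_smul_emb]
  simp

lemma dot_projPt {d : ℕ} (σ : Pt (d + 1)) (c x : Pt d) :
    ∑ i, σ i * projPt c x i
      = (-2 / ∑ i, c i * x i) * ((∑ i, σ (Fin.castSucc i) * x i) + σ (Fin.last d)) := by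
  rw [projPt, dot_smul_emb]

lemma projPt_last {d : ℕ} (c x : Pt d) :
    projPt c x (Fin.last d) = -2 / ∑ i, c i * x i := by
  simp [projPt, emb]

lemma projPt_castSucc {d : ℕ} (c x : Pt d) (i : Fin d) :
    projPt c x (Fin.castSucc i) = (-2 / ∑ i, c i * x i) * x i := by
  simp [projPt, emb]

lemma projPt_inj {d : ℕ} (c x y : Pt d) (hx : (∑ i, c i * x i) < 0)
    (hy : (∑ i, c i * y i) < 0) (h : projPt c x = projPt c y) : x = y := by
  have hl := congrFun h (Fin.last d)
  rw [projPt_last, projPt_last] at hl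
  have hxne : (∑ i, c i * x i) ≠ 0 := ne_of_lt hx
  have hyne : (∑ i, c i * y i) ≠ 0 := ne_of_lt hy
  have hpos : -2 / (∑ i, c i * x i) > 0 := div_pos_of_neg_of_neg (by norm_num) hx
  funext i
  have hc := congrFun h (Fin.castSucc i)
  rw [projPt_castSucc, projPt_castSucc, ← hl] at hc
  exact mul_left_cancel₀ (ne_of_gt hpos) hc

lemma mem_coneSlice_iff {d : ℕ} (Q : Set (Pt d)) (c : Pt d) (y : Pt (d + 1)) :
    y ∈ coneSlice Q c ↔ ∃ x, x ∈ Q ∧ (∑ i, c i * x i) < 0 ∧ y = projPt c x := by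
  constructor
  · rintro ⟨⟨x, hxQ, α, hα, rfl⟩, hdot⟩
    rw [dot_snoc_smul_emb] at hdot
    have hL : α * (∑ i, c i * x i) = -2 := by linarith [hdot]
    have hLne : (∑ i, c i * x i) ≠ 0 := by
      intro h0; rw [h0, mul_zero] at hL; norm_num at hL
    have hLneg : (∑ i, c i * x i) < 0 := by
      rcases lt_or_gt_of_ne hLne with h | h
      · exact h
      · nlinarith
    refine ⟨x, hxQ, hLneg, ?_⟩
    have : α = -2 / (∑ i, c i * x i) := by field_simp; linarith [hL]
    rw [projPt, this]
  · rintro ⟨x, hxQ, hL, rfl⟩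
    have hLne : (∑ i, c i * x i) ≠ 0 := ne_of_lt hL
    refine ⟨⟨x, hxQ, -2 / (∑ i, c i * x i), ?_, rfl⟩, ?_⟩
    · exact le_of_lt (div_pos_of_neg_of_neg (by norm_num) hL)
    · rw [projPt, dot_snoc_smul_emb, add_zero]
      field_simp



lemma dot_snoc {d : ℕ} (c : Pt d) (t : ℝ) (y : Pt (d + 1)) :
    ∑ i, (Fin.snoc c t : Pt (d + 1)) i * y i
      = (∑ i, c i * y (Fin.castSucc i)) + t * y (Fin.last d) := by
  rw [Fin.sum_univ_castSucc]
  simp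

lemma Q_combo {d : ℕ} {Q : Set (Pt d)} (hQ : IsPolyhedron Q) {x y : Pt d}
    (hx : x ∈ Q) (hy : y ∈ Q) {t : ℝ} (h0 : 0 ≤ t) (h1 : t ≤ 1) :
    (1 - t) • x + t • y ∈ Q := by
  obtain ⟨s, rfl⟩ := hQ
  intro p hp
  have hx' := hx p hp
  have hy' := hy p hp
  rw [dot_add_smul]
  nlinarith

lemma face_subset {d : ℕ} {Q F : Set (Pt d)} (hF : IsFace Q F) : F ⊆ Q := by
  rcases hF with rfl | rfl | ⟨g, rfl⟩
  · exact Set.empty_subset _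
  · exact subset_rfl
  · exact Set.sep_subset _ _

lemma face_combo {d : ℕ} {Q F : Set (Pt d)} (hQ : IsPolyhedron Q) (hF : IsFace Q F)
    {x y : Pt d} (hx : x ∈ F) (hy : y ∈ F) {t : ℝ} (h0 : 0 ≤ t) (h1 : t ≤ 1) :
    (1 - t) • x + t • y ∈ F := by
  rcases hF with rfl | rfl | ⟨g, rfl⟩
  · exact absurd hx (Set.notMem_empty x)
  · exact Q_combo hQ hx hy h0 h1
  · obtain ⟨hxQ, hxm⟩ := hx
    obtain ⟨hyQ, hym⟩ := hy
    refine ⟨Q_combo hQ hxQ hyQ h0 h1, fun z hz => ?_⟩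
    have h1z := hxm z hz
    have h2z := hym z hz
    rw [dot_add_smul]
    nlinarith

lemma coneSlice_poly {d : ℕ} {Q : Set (Pt d)} {c : Pt d} (hQ : IsPolyhedron Q)
    (hslab : ∀ x ∈ Q, -1 ≤ ∑ i, c i * x i ∧ ∑ i, c i * x i ≤ 0) :
    IsPolyhedron (coneSlice Q c) := by
  obtain ⟨s, hs⟩ := hQ
  classical
  refine ⟨insert ((Fin.snoc c 0 : Pt (d + 1)), -2)
      (insert (-(Fin.snoc c 0 : Pt (d + 1)), (2 : ℝ))
        (insert ((Fin.snoc (0 : Pt d) (-1 : ℝ) : Pt (d + 1)), (-2 : ℝ))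
          (s.image fun p => ((Fin.snoc p.1 (-p.2) : Pt (d + 1)), (0 : ℝ))))), ?_⟩
  ext y
  simp only [Set.mem_setOf_eq, Finset.mem_insert, Finset.mem_image]
  constructor
  · intro hy
    rw [mem_coneSlice_iff] at hy
    obtain ⟨x, hxQ, hL, rfl⟩ := hy
    have hLne : (∑ i, c i * x i) ≠ 0 := ne_of_lt hL
    have hL1 : -1 ≤ ∑ i, c i * x i := (hslab x hxQ).1
    have hα2 : 2 ≤ -2 / (∑ i, c i * x i) := by
      rw [le_div_iff_of_neg hL]; linarith
    rintro p (rfl | rfl | rfl | ⟨q, hq, rfl⟩)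
    · rw [projPt, dot_snoc_smul_emb, add_zero]
      rw [div_mul_cancel₀ _ hLne]
    · simp only [Pi.neg_apply, neg_mul, Finset.sum_neg_distrib]
      rw [projPt, dot_snoc_smul_emb, add_zero, div_mul_cancel₀ _ hLne]
      norm_num
    · rw [projPt, dot_snoc_smul_emb]
      simp only [Pi.zero_apply, zero_mul, Finset.sum_const_zero, zero_add]
      nlinarith
    · rw [projPt, dot_snoc_smul_emb]
      have hqx := by rw [hs] at hxQ; exact hxQ q hq
      nlinarith
  · intro hy
    have h1 := hy _ (Or.inl rfl)
    have h2 := hy _ (Or.inr (Or.inl rfl))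
    have h3 := hy _ (Or.inr (Or.inr (Or.inl rfl)))
    simp only at h1 h2 h3
    rw [show (∑ i, (-(Fin.snoc c 0 : Pt (d+1))) i * y i) = -(∑ i, (Fin.snoc c 0 : Pt (d+1)) i * y i) by
      simp [Pi.neg_apply, neg_mul, Finset.sum_neg_distrib]] at h2
    have hdot : ∑ i, (Fin.snoc c (0:ℝ) : Pt (d + 1)) i * y i = -2 := by linarith
    rw [dot_snoc] at h3
    simp only [Pi.zero_apply, zero_mul, Finset.sum_const_zero, zero_add, neg_mul, one_mul] at h3
    have hT : 2 ≤ y (Fin.last d) := by linarith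
    have hTpos : (0:ℝ) < y (Fin.last d) := by linarith
    have hTne : y (Fin.last d) ≠ 0 := ne_of_gt hTpos
    set T := y (Fin.last d) with hTdef
    refine ⟨⟨fun i => y (Fin.castSucc i) / T, ?_, T, le_of_lt hTpos, ?_⟩, hdot⟩
    · rw [hs]
      intro q hq
      have hyq := hy _ (Or.inr (Or.inr (Or.inr ⟨q, hq, rfl⟩)))
      rw [dot_snoc] at hyq
      simp only at hyq
      have : ∑ i, q.1 i * (y (Fin.castSucc i) / T) = (∑ i, q.1 i * y (Fin.castSucc i)) / T := by
        rw [Finset.sum_div]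
        exact Finset.sum_congr rfl fun i _ => by ring
      rw [this, div_le_iff₀ hTpos]
      nlinarith
    · funext i
      refine Fin.lastCases ?_ (fun j => ?_) i
      · simp [emb, hTdef]
      · simp only [Pi.smul_apply, smul_eq_mul, emb, Fin.snoc_castSucc]
        field_simp


lemma transfer {d : ℕ} (c x : Pt d) (σ : Pt (d + 1)) (M : ℝ) (lam : Pt d) (β : ℝ)
    (hlam : ∀ j, lam j = M * c j + 2 * σ (Fin.castSucc j))
    (hβ : β = -2 * σ (Fin.last d))
    (hL : (∑ i, c i * x i) < 0) :
    ((∑ i, lam i * x i) ≤ β ↔ (∑ i, σ i * projPt c x i) ≤ M) ∧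
      ((∑ i, lam i * x i) = β ↔ (∑ i, σ i * projPt c x i) = M) := by
  have hLne : (∑ i, c i * x i) ≠ 0 := ne_of_lt hL
  have hsum : (∑ i, lam i * x i)
      = M * (∑ i, c i * x i) + 2 * (∑ i, σ (Fin.castSucc i) * x i) := by
    rw [Finset.mul_sum, Finset.mul_sum, ← Finset.sum_add_distrib]
    exact Finset.sum_congr rfl fun i _ => by rw [hlam]; ring
  have hAB : (∑ i, lam i * x i) - β
      = (-(∑ i, c i * x i)) * ((∑ i, σ i * projPt c x i) - M) := by
    rw [hsum, hβ, dot_projPt]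
    field_simp
    ring
  have hnegL : 0 < -(∑ i, c i * x i) := by linarith
  constructor
  · constructor
    · intro h
      nlinarith
    · intro h
      nlinarith
  · constructor
    · intro h
      rw [h, sub_self] at hAB
      have := (mul_eq_zero.mp hAB.symm).resolve_left (by linarith)
      linarith
    · intro h
      rw [h, sub_self, mul_zero, sub_eq_zero] at hAB
      exact hAB

lemma extend_bound {d : ℕ} {Q : Set (Pt d)} {c : Pt d} (hQ : IsPolyhedron Q)
    (lam : Pt d) (β : ℝ)
    (H : ∀ z ∈ Q, (∑ i, c i * z i) < 0 → (∑ i, lam i * z i) ≤ β)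
    {x x0 : Pt d} (hx : x ∈ Q) (hxZ : (∑ i, c i * x i) = 0)
    (hx0 : x0 ∈ Q) (hL0 : (∑ i, c i * x0 i) < 0) :
    (∑ i, lam i * x i) ≤ β := by
  by_contra hcon
  push_neg at hcon
  set ε := (∑ i, lam i * x i) - β with hε
  have hεpos : 0 < ε := by linarith
  set D := (∑ i, lam i * x i) - (∑ i, lam i * x0 i) with hD
  have key : ∀ t : ℝ, 0 < t → t ≤ 1 → ε ≤ t * D := by
    intro t ht0 ht1
    have hmem : (1 - t) • x + t • x0 ∈ Q := Q_combo hQ hx hx0 (le_of_lt ht0) ht1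
    have hLt : (∑ i, c i * ((1 - t) • x + t • x0) i) < 0 := by
      rw [dot_add_smul, hxZ, mul_zero, zero_add]
      nlinarith
    have hb := H _ hmem hLt
    rw [dot_add_smul] at hb
    nlinarith
  rcases le_or_gt D 0 with hDle | hDpos
  · have := key 1 one_pos le_rfl
    nlinarith
  · have h1 : 0 < ε / (2 * D) := by positivity
    have := key (min 1 (ε / (2 * D))) (lt_min one_pos h1) (min_le_left _ _)
    have hle : min 1 (ε / (2 * D)) * D ≤ (ε / (2 * D)) * D :=
      mul_le_mul_of_nonneg_right (min_le_right _ _) (le_of_lt hDpos)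
    have heq : (ε / (2 * D)) * D = ε / 2 := by field_simp
    nlinarith

lemma face_determined {d : ℕ} {Q : Set (Pt d)} {c : Pt d} (hQ : IsPolyhedron Q)
    (hslab : ∀ x ∈ Q, -1 ≤ ∑ i, c i * x i ∧ ∑ i, c i * x i ≤ 0)
    {F G : Set (Pt d)} (hF : IsFace Q F) (hG : IsFace Q G)
    (h : F \ {x | ∑ i, c i * x i = 0} = G \ {x | ∑ i, c i * x i = 0})
    (hne : ¬ F ⊆ {x | ∑ i, c i * x i = 0}) : F ⊆ G := by
  obtain ⟨x0, hx0F, hx0Z⟩ := Set.not_subset.mp hne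
  have hx0Q : x0 ∈ Q := face_subset hF hx0F
  have hL0 : (∑ i, c i * x0 i) < 0 :=
    lt_of_le_of_ne (hslab x0 hx0Q).2 hx0Z
  intro x hx
  by_cases hxZ : (∑ i, c i * x i) = 0
  · have hxQ : x ∈ Q := face_subset hF hx
    have hmemt : ∀ t : ℝ, 0 < t → t ≤ 1 → (1 - t) • x + t • x0 ∈ G := by
      intro t ht0 ht1
      have h1 : (1 - t) • x + t • x0 ∈ F := face_combo hQ hF hx hx0F (le_of_lt ht0) ht1
      have h2 : (∑ i, c i * ((1 - t) • x + t • x0) i) < 0 := by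
        rw [dot_add_smul, hxZ, mul_zero, zero_add]
        nlinarith
      have : (1 - t) • x + t • x0 ∈ F \ {x | ∑ i, c i * x i = 0} :=
        ⟨h1, ne_of_lt h2⟩
      rw [h] at this
      exact this.1
    rcases hG with rfl | rfl | ⟨g, rfl⟩
    · exact absurd (hmemt (1/2) (by norm_num) (by norm_num)) (Set.notMem_empty _)
    · exact hxQ
    · have hm2 := hmemt (1/2) (by norm_num) (by norm_num)
      have hm4 := hmemt (1/4) (by norm_num) (by norm_num)
      obtain ⟨hm2Q, hm2max⟩ := hm2
      obtain ⟨hm4Q, hm4max⟩ := hm4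
      have e2 : (∑ i, g i * ((1 - (1/2:ℝ)) • x + (1/2:ℝ) • x0) i)
          = (1 - 1/2) * (∑ i, g i * x i) + (1/2) * (∑ i, g i * x0 i) := dot_add_smul ..
      have e4 : (∑ i, g i * ((1 - (1/4:ℝ)) • x + (1/4:ℝ) • x0) i)
          = (1 - 1/4) * (∑ i, g i * x i) + (1/4) * (∑ i, g i * x0 i) := dot_add_smul ..
      have h24 := hm2max _ hm4Q
      have h42 := hm4max _ hm2Q
      have hgx : (∑ i, g i * x i) = (∑ i, g i * x0 i) := by
        rw [e2, e4] at h24 h42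
        linarith
      refine ⟨hxQ, fun z hz => ?_⟩
      have := hm2max z hz
      rw [e2, hgx] at this
      linarith
  · have : x ∈ F \ {x | ∑ i, c i * x i = 0} := ⟨hx, hxZ⟩
    rw [h] at this
    exact this.1

lemma image_diff {d : ℕ} {Q : Set (Pt d)} {c : Pt d}
    (hslab : ∀ x ∈ Q, -1 ≤ ∑ i, c i * x i ∧ ∑ i, c i * x i ≤ 0) :
    projPt c '' (Q \ {x | ∑ i, c i * x i = 0}) = coneSlice Q c := by
  ext y
  rw [mem_coneSlice_iff]
  constructor
  · rintro ⟨x, ⟨hxQ, hxZ⟩, rfl⟩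
    exact ⟨x, hxQ, lt_of_le_of_ne (hslab x hxQ).2 hxZ, rfl⟩
  · rintro ⟨x, hxQ, hL, rfl⟩
    exact ⟨x, ⟨hxQ, ne_of_lt hL⟩, rfl⟩

end ProjAux

open ProjAux

/-- Projective transformation sending the hyperplane `c᙮x = 0` to infinity.
Let `Q` be a polytope in the slab `-1 ≤ c᙮x ≤ 0`, with exactly one vertex on
`c᙮x = -1` and with `{x ∈ Q | c᙮x = 0}` a face of `Q`. Then `Q' = coneSlice Q c`
is a polyhedron whose face lattice is that of `Q` with all faces contained in
`{c᙮x = 0}` removed, the correspondence `F ↦ projPt c '' (F \ {c᙮x = 0})` being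
induced by the central projection from the origin. -/
theorem projective_transform_face_lattice {d : ℕ} (Q : Set (Pt d)) (c : Pt d)
    (hQ : IsPolyhedron Q) (hbdd : Bornology.IsBounded Q)
    (hslab : ∀ x ∈ Q, -1 ≤ ∑ i, c i * x i ∧ ∑ i, c i * x i ≤ 0)
    (hvert : ∃! v, IsVertex Q v ∧ ∑ i, c i * v i = -1)
    (hface0 : IsFace Q {x ∈ Q | ∑ i, c i * x i = 0}) :
    IsPolyhedron (coneSlice Q c) ∧
    (∀ F : Set (Pt d), IsFace Q F → ¬ F ⊆ {x | ∑ i, c i * x i = 0} →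
        IsFace (coneSlice Q c) (projPt c '' (F \ {x | ∑ i, c i * x i = 0}))) ∧
    (∀ F' : Set (Pt (d + 1)), IsFace (coneSlice Q c) F' → F' ≠ ∅ →
        ∃! F : Set (Pt d), IsFace Q F ∧ ¬ F ⊆ {x | ∑ i, c i * x i = 0} ∧
          F' = projPt c '' (F \ {x | ∑ i, c i * x i = 0})) := by
  classical
  obtain ⟨v, ⟨hvVert, hvL⟩, -⟩ := hvert
  have hvQ : v ∈ Q := face_subset hvVert rfl
  have hQnotZ : ¬ Q ⊆ {x | ∑ i, c i * x i = 0} := by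
    intro h
    have hv0 : (∑ i, c i * v i) = 0 := h hvQ
    rw [hvL] at hv0
    norm_num at hv0
  refine ⟨coneSlice_poly hQ hslab, ?_, ?_⟩
  · -- Part 2: images of faces are faces
    intro F hF hFZ
    rcases hF with rfl | rfl | ⟨w, rfl⟩
    · exact absurd (Set.empty_subset _) hFZ
    · rw [image_diff hslab]
      exact Or.inr (Or.inl rfl)
    · obtain ⟨x0, hx0F, hx0Z⟩ := Set.not_subset.mp hFZ
      have hx0Q : x0 ∈ Q := hx0F.1
      have hx0max : ∀ y ∈ Q, (∑ i, w i * y i) ≤ ∑ i, w i * x0 i := hx0F.2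
      have hL0 : (∑ i, c i * x0 i) < 0 := lt_of_le_of_ne (hslab x0 hx0Q).2 hx0Z
      obtain ⟨σ, hσc, hσl⟩ : ∃ σ : Pt (d + 1),
          (∀ j, σ (Fin.castSucc j) = w j) ∧ σ (Fin.last d) = -(∑ i, w i * x0 i) :=
        ⟨Fin.snoc w (-(∑ i, w i * x0 i)), fun j => Fin.snoc_castSucc .., Fin.snoc_last ..⟩
      obtain ⟨lam, hlam⟩ : ∃ lam : Pt d, ∀ j, lam j = 2 * w j := ⟨_, fun _ => rfl⟩
      have htr : ∀ x : Pt d, (∑ i, c i * x i) < 0 →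
          ((∑ i, lam i * x i) ≤ 2 * (∑ i, w i * x0 i) ↔ (∑ i, σ i * projPt c x i) ≤ 0) ∧
          ((∑ i, lam i * x i) = 2 * (∑ i, w i * x0 i) ↔ (∑ i, σ i * projPt c x i) = 0) := by
        intro x hLx
        exact transfer c x σ 0 lam (2 * (∑ i, w i * x0 i))
          (fun j => by rw [hlam j, hσc j]; ring) (by rw [hσl]; ring) hLx
      have hsum2 : ∀ x : Pt d, (∑ i, lam i * x i) = 2 * ∑ i, w i * x i := by
        intro x
        rw [Finset.mul_sum]
        exact Finset.sum_congr rfl fun i _ => by rw [hlam]; ring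
      have hmemF : ∀ x, x ∈ Q → ((∑ i, w i * x i) = (∑ i, w i * x0 i) ↔
          x ∈ {x ∈ Q | ∀ y ∈ Q, (∑ i, w i * y i) ≤ ∑ i, w i * x i}) := by
        intro x hxQ
        constructor
        · intro he
          exact ⟨hxQ, fun y hy => le_trans (hx0max y hy) (le_of_eq he.symm)⟩
        · intro hxF
          exact le_antisymm (hx0max x hxQ) (hxF.2 x0 hx0Q)
      refine Or.inr (Or.inr ⟨σ, ?_⟩)
      ext y
      constructor
      · rintro ⟨x, ⟨hxF, hxZ⟩, rfl⟩
        have hxQ : x ∈ Q := hxF.1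
        have hLx : (∑ i, c i * x i) < 0 := lt_of_le_of_ne (hslab x hxQ).2 hxZ
        have hy0 : (∑ i, σ i * projPt c x i) = 0 := by
          refine (htr x hLx).2.mp ?_
          rw [hsum2, ((hmemF x hxQ).mpr hxF)]
        refine ⟨(mem_coneSlice_iff Q c _).mpr ⟨x, hxQ, hLx, rfl⟩, fun z hz => ?_⟩
        obtain ⟨x', hx'Q, hLx', rfl⟩ := (mem_coneSlice_iff Q c z).mp hz
        rw [hy0]
        refine (htr x' hLx').1.mp ?_
        rw [hsum2]
        have := hx0max x' hx'Q
        linarith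
      · rintro ⟨hyQ', hymax⟩
        obtain ⟨x, hxQ, hLx, rfl⟩ := (mem_coneSlice_iff Q c y).mp hyQ'
        have hp0 : projPt c x0 ∈ coneSlice Q c :=
          (mem_coneSlice_iff Q c _).mpr ⟨x0, hx0Q, hL0, rfl⟩
        have h00 : (∑ i, σ i * projPt c x0 i) = 0 := by
          refine (htr x0 hL0).2.mp ?_
          rw [hsum2]
        have hge : (0:ℝ) ≤ ∑ i, σ i * projPt c x i := by
          have := hymax _ hp0
          rw [h00] at this
          exact this
        have hle : (∑ i, σ i * projPt c x i) ≤ 0 := by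
          refine (htr x hLx).1.mp ?_
          rw [hsum2]
          have := hx0max x hxQ
          linarith
        have heq : (∑ i, σ i * projPt c x i) = 0 := le_antisymm hle hge
        have hwx : (∑ i, w i * x i) = (∑ i, w i * x0 i) := by
          have := (htr x hLx).2.mpr heq
          rw [hsum2] at this
          linarith
        exact ⟨x, ⟨(hmemF x hxQ).mp hwx, ne_of_lt hLx⟩, rfl⟩
  · -- Part 3: preimages of faces
    intro F' hF' hne
    have hdiffsub : ∀ A B : Set (Pt d), A ⊆ Q → B ⊆ Q →
        projPt c '' (A \ {x | ∑ i, c i * x i = 0})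
          = projPt c '' (B \ {x | ∑ i, c i * x i = 0}) →
        A \ {x | ∑ i, c i * x i = 0} ⊆ B \ {x | ∑ i, c i * x i = 0} := by
      intro A B hA hB him x hx
      have hmem : projPt c x ∈ projPt c '' (B \ {x | ∑ i, c i * x i = 0}) := by
        rw [← him]
        exact Set.mem_image_of_mem _ hx
      obtain ⟨x', hx', he⟩ := hmem
      have hLx : (∑ i, c i * x i) < 0 := lt_of_le_of_ne (hslab x (hA hx.1)).2 hx.2
      have hLx' : (∑ i, c i * x' i) < 0 := lt_of_le_of_ne (hslab x' (hB hx'.1)).2 hx'.2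
      rwa [projPt_inj c x' x hLx' hLx he] at hx'
    suffices hex : ∃ F : Set (Pt d), IsFace Q F ∧ ¬ F ⊆ {x | ∑ i, c i * x i = 0} ∧
        F' = projPt c '' (F \ {x | ∑ i, c i * x i = 0}) by
      obtain ⟨F, hFf, hFz, hFe⟩ := hex
      refine ⟨F, ⟨hFf, hFz, hFe⟩, ?_⟩
      rintro G ⟨hGf, hGz, hGe⟩
      have him : projPt c '' (G \ {x | ∑ i, c i * x i = 0})
          = projPt c '' (F \ {x | ∑ i, c i * x i = 0}) := by rw [← hGe, ← hFe]
      have hdiff : G \ {x | ∑ i, c i * x i = 0} = F \ {x | ∑ i, c i * x i = 0} :=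
        Set.Subset.antisymm
          (hdiffsub G F (face_subset hGf) (face_subset hFf) him)
          (hdiffsub F G (face_subset hFf) (face_subset hGf) him.symm)
      exact Set.Subset.antisymm (face_determined hQ hslab hGf hFf hdiff hGz)
        (face_determined hQ hslab hFf hGf hdiff.symm hFz)
    rcases hF' with rfl | rfl | ⟨σ, rfl⟩
    · exact absurd rfl hne
    · exact ⟨Q, Or.inr (Or.inl rfl), hQnotZ, (image_diff hslab).symm⟩
    · obtain ⟨y0, hy0Q', hy0max⟩ := Set.nonempty_iff_ne_empty.mpr hne
      obtain ⟨x0, hx0Q, hL0, hy0eq⟩ := (mem_coneSlice_iff Q c y0).mp hy0Q'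
      obtain ⟨lam, hlam⟩ : ∃ lam : Pt d,
          ∀ j, lam j = (∑ i, σ i * y0 i) * c j + 2 * σ (Fin.castSucc j) :=
        ⟨_, fun _ => rfl⟩
      have htr : ∀ x : Pt d, (∑ i, c i * x i) < 0 →
          ((∑ i, lam i * x i) ≤ -2 * σ (Fin.last d) ↔
            (∑ i, σ i * projPt c x i) ≤ (∑ i, σ i * y0 i)) ∧
          ((∑ i, lam i * x i) = -2 * σ (Fin.last d) ↔
            (∑ i, σ i * projPt c x i) = (∑ i, σ i * y0 i)) := by
        intro x hLx
        exact transfer c x σ (∑ i, σ i * y0 i) lam (-2 * σ (Fin.last d)) hlam rfl hLx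
      have hbound' : ∀ z ∈ Q, (∑ i, c i * z i) < 0 →
          (∑ i, lam i * z i) ≤ -2 * σ (Fin.last d) := by
        intro z hz hLz
        refine (htr z hLz).1.mpr ?_
        exact hy0max _ ((mem_coneSlice_iff Q c _).mpr ⟨z, hz, hLz, rfl⟩)
      have hbound : ∀ z ∈ Q, (∑ i, lam i * z i) ≤ -2 * σ (Fin.last d) := by
        intro z hz
        rcases lt_or_eq_of_le (hslab z hz).2 with h | h
        · exact hbound' z hz h
        · exact extend_bound hQ lam (-2 * σ (Fin.last d)) hbound' hz h hx0Q hL0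
      have hx0β : (∑ i, lam i * x0 i) = -2 * σ (Fin.last d) :=
        (htr x0 hL0).2.mpr (by rw [← hy0eq])
      have hchar : ∀ x, x ∈ {x ∈ Q | ∀ y ∈ Q, (∑ i, lam i * y i) ≤ ∑ i, lam i * x i} ↔
          x ∈ Q ∧ (∑ i, lam i * x i) = -2 * σ (Fin.last d) := by
        intro x
        constructor
        · rintro ⟨hxQ, hmax⟩
          exact ⟨hxQ, le_antisymm (hbound x hxQ) (hx0β ▸ hmax x0 hx0Q)⟩
        · rintro ⟨hxQ, hxe⟩
          exact ⟨hxQ, fun y hy => le_trans (hbound y hy) (le_of_eq hxe.symm)⟩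
      refine ⟨{x ∈ Q | ∀ y ∈ Q, (∑ i, lam i * y i) ≤ ∑ i, lam i * x i},
        Or.inr (Or.inr ⟨lam, rfl⟩), ?_, ?_⟩
      · refine Set.not_subset.mpr ⟨x0, (hchar x0).mpr ⟨hx0Q, hx0β⟩, ne_of_lt hL0⟩
      · ext y
        constructor
        · rintro ⟨hyQ', hymax⟩
          obtain ⟨x, hxQ, hLx, rfl⟩ := (mem_coneSlice_iff Q c y).mp hyQ'
          have hge : (∑ i, σ i * y0 i) ≤ ∑ i, σ i * projPt c x i := hymax y0 hy0Q'
          have hle : (∑ i, σ i * projPt c x i) ≤ ∑ i, σ i * y0 i := hy0max _ hyQ'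
          have heq := le_antisymm hle hge
          exact ⟨x, ⟨(hchar x).mpr ⟨hxQ, (htr x hLx).2.mpr heq⟩, ne_of_lt hLx⟩, rfl⟩
        · rintro ⟨x, ⟨hxF, hxZ⟩, rfl⟩
          have hxQ : x ∈ Q := hxF.1
          have hLx : (∑ i, c i * x i) < 0 := lt_of_le_of_ne (hslab x hxQ).2 hxZ
          have hσx : (∑ i, σ i * projPt c x i) = ∑ i, σ i * y0 i :=
            (htr x hLx).2.mp ((hchar x).mp hxF).2
          refine ⟨(mem_coneSlice_iff Q c _).mpr ⟨x, hxQ, hLx, rfl⟩, fun z hz => ?_⟩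
          rw [hσx]
          exact hy0max z hz
end
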